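/- arXiv:1707.00353 — 10 statements merged into one kernel-verified Lean document; each statement's English description precedes it below -/
import Mathlib

section
/- Let F be a finite field with q elements, let H₁,…,H_k ∈ F[X₁,…,X_n] be nonzero polynomials, and let C₁,…,C_n be nonempty subsets of F such that (q-1)·∑_{i=1}^k deg(H_i) < ∑_{j=1}^n (|C_j| - 1). Then the set {(c₁,…,c_n) ∈ C₁×…×C_n : H_i(c₁,…,c_n) = 0 for all i} is not a singleton (i.e., it is either empty or contains at least two elements). -/
open Polynomial Lagrange Finset

/-- Coefficient of the Lagrange basis polynomial at top degree is the nodal weight. -/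
lemma coeff_lagrange_basis {F : Type*} [Field F] [DecidableEq F] (S : Finset F) {c : F} (hc : c ∈ S) :
    (Lagrange.basis S id c).coeff (S.card - 1) = nodalWeight S id c := by
  rw [basis_eq_prod_sub_inv_mul_nodal_div hc, ← nodal_erase_eq_nodal_div hc, coeff_C_mul]
  have hdeg : (nodal (S.erase c) id).natDegree = S.card - 1 := by
    rw [natDegree_nodal, Finset.card_erase_of_mem hc]
  rw [← hdeg, (nodal_monic).coeff_natDegree, mul_one]

/-- Key univariate fact: low-degree power sums weighted by nodal weights vanish. -/
lemma sum_pow_mul_nodalWeight {F : Type*} [Field F] [DecidableEq F] (S : Finset F) (d : ℕ)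
    (hd : d + 1 < S.card) :
    ∑ c ∈ S, c ^ d * nodalWeight S id c = 0 := by
  have hinj : Set.InjOn (id : F → F) S := Function.injective_id.injOn
  have hX : (X ^ d : F[X]) = interpolate S id fun c => (X ^ d : F[X]).eval (id c) :=
    eq_interpolate hinj (by
      rw [degree_X_pow]
      exact_mod_cast lt_trans (Nat.lt_succ_self d) hd)
  have h := congrArg (fun p : F[X] => p.coeff (S.card - 1)) hX
  simp only [interpolate_apply, finset_sum_coeff, coeff_C_mul, coeff_X_pow] at h
  rw [if_neg (by omega)] at h
  rw [eq_comm, h]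
  refine Finset.sum_congr rfl fun c hc => ?_
  rw [coeff_lagrange_basis S hc]
  simp

/-- Key multivariate fact: the weighted sum over the grid of a low total degree
polynomial vanishes. -/
lemma key_functional {F : Type*} [Field F] [DecidableEq F] {n : ℕ} (P : MvPolynomial (Fin n) F)
    (C : Fin n → Finset F) (hdeg : P.totalDegree < ∑ j, ((C j).card - 1)) :
    ∑ x ∈ Fintype.piFinset C,
      MvPolynomial.eval x P * ∏ j, nodalWeight (C j) id (x j) = 0 := by
  have hev : ∀ x : Fin n → F, MvPolynomial.eval x P
      = ∑ d ∈ P.support, MvPolynomial.coeff d P * ∏ j, x j ^ d j := fun x =>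
    MvPolynomial.eval_eq' x P
  calc ∑ x ∈ Fintype.piFinset C,
        MvPolynomial.eval x P * ∏ j, nodalWeight (C j) id (x j)
      = ∑ x ∈ Fintype.piFinset C, ∑ d ∈ P.support,
          MvPolynomial.coeff d P * ∏ j, (x j ^ d j * nodalWeight (C j) id (x j)) := by
        refine Finset.sum_congr rfl fun x _ => ?_
        rw [hev x, Finset.sum_mul]
        refine Finset.sum_congr rfl fun d _ => ?_
        rw [mul_assoc, Finset.prod_mul_distrib]
    _ = ∑ d ∈ P.support, MvPolynomial.coeff d P *
          ∑ x ∈ Fintype.piFinset C, ∏ j, (x j ^ d j * nodalWeight (C j) id (x j)) := by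
        rw [Finset.sum_comm]
        exact Finset.sum_congr rfl fun d _ => (Finset.mul_sum _ _ _).symm
    _ = 0 := by
        refine Finset.sum_eq_zero fun d hd => ?_
        rw [← Finset.prod_univ_sum (fun j => C j)
          (fun j c => c ^ d j * nodalWeight (C j) id c)]
        have hdsum : ∑ j, d j ≤ P.totalDegree := by
          have := MvPolynomial.le_totalDegree hd
          rwa [Finsupp.sum_fintype _ _ (fun _ => rfl)] at this
        have hex : ∃ j : Fin n, d j + 1 < (C j).card := by
          by_contra hcon
          push_neg at hcon
          have : ∀ j, (C j).card - 1 ≤ d j := fun j => by have := hcon j; omega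
          have hle : ∑ j, ((C j).card - 1) ≤ ∑ j, d j :=
            Finset.sum_le_sum fun j _ => this j
          omega
        obtain ⟨j0, hj0⟩ := hex
        rw [Finset.prod_eq_zero (Finset.mem_univ j0)
          (sum_pow_mul_nodalWeight (C j0) (d j0) hj0), mul_zero]

/-- Restricted-variable Chevalley–Warning theorem (Brink, Schauz). -/
theorem stmt_0 (F : Type*) [Field F] [Fintype F] (q n k : ℕ) (hq : Fintype.card F = q)
    (H : Fin k → MvPolynomial (Fin n) F) (hH : ∀ i, H i ≠ 0)
    (C : Fin n → Finset F) (hC : ∀ j, (C j).Nonempty)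
    (hdeg : (q - 1) * ∑ i, (H i).totalDegree < ∑ j, ((C j).card - 1)) :
    ¬ ∃ a : Fin n → F,
      {x : Fin n → F | (∀ j, x j ∈ C j) ∧ ∀ i, MvPolynomial.eval x (H i) = 0} = {a} := by
  classical
  rintro ⟨a, hset⟩
  have hq2 : 2 ≤ q := hq ▸ Fintype.one_lt_card
  have ha : a ∈ {x : Fin n → F | (∀ j, x j ∈ C j) ∧ ∀ i, MvPolynomial.eval x (H i) = 0} := by
    rw [hset]; rfl
  obtain ⟨haC, haH⟩ := ha
  set P : MvPolynomial (Fin n) F := ∏ i, (1 - (H i) ^ (q - 1)) with hP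
  -- total degree bound
  have hPdeg : P.totalDegree < ∑ j, ((C j).card - 1) := by
    refine lt_of_le_of_lt ?_ hdeg
    calc P.totalDegree ≤ ∑ i, (1 - (H i) ^ (q - 1)).totalDegree :=
          MvPolynomial.totalDegree_finset_prod _ _
      _ ≤ ∑ i, (q - 1) * (H i).totalDegree := by
          refine Finset.sum_le_sum fun i _ => ?_
          refine le_trans (MvPolynomial.totalDegree_sub _ _) ?_
          rw [MvPolynomial.totalDegree_one]
          simpa using MvPolynomial.totalDegree_pow (H i) (q - 1)
      _ = (q - 1) * ∑ i, (H i).totalDegree := (Finset.mul_sum _ _ _).symm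
  -- value at a
  have hPa : MvPolynomial.eval a P = 1 := by
    rw [hP, map_prod]
    refine Finset.prod_eq_one fun i _ => ?_
    rw [map_sub, map_pow, haH i, map_one, zero_pow (by omega), sub_zero]
  -- value at other grid points
  have hPx : ∀ x ∈ Fintype.piFinset C, x ≠ a → MvPolynomial.eval x P = 0 := by
    intro x hx hxa
    have hxC : ∀ j, x j ∈ C j := by
      intro j; exact (Fintype.mem_piFinset.mp hx) j
    have : ∃ i, MvPolynomial.eval x (H i) ≠ 0 := by
      by_contra hcon
      push_neg at hcon
      have : x ∈ ({a} : Set (Fin n → F)) := hset ▸ ⟨hxC, hcon⟩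
      exact hxa this
    obtain ⟨i, hi⟩ := this
    rw [hP, map_prod]
    refine Finset.prod_eq_zero (Finset.mem_univ i) ?_
    rw [map_sub, map_pow, map_one, ← hq, FiniteField.pow_card_sub_one_eq_one _ hi, sub_self]
  -- apply the key functional
  have hkey := key_functional P C hPdeg
  have haGrid : a ∈ Fintype.piFinset C := Fintype.mem_piFinset.mpr haC
  rw [Finset.sum_eq_single_of_mem a haGrid
    (fun x hx hxa => by rw [hPx x hx hxa, zero_mul])] at hkey
  rw [hPa, one_mul] at hkey
  have : ∏ j, nodalWeight (C j) id (a j) ≠ 0 :=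
    Finset.prod_ne_zero_iff.mpr fun j _ =>
      nodalWeight_ne_zero Function.injective_id.injOn (haC j)
  exact this hkey
end

section
/- Let F be a finite field with q elements, f₁,…,f_n ∈ F[X] univariate polynomials and H₁,…,H_k ∈ F[X₁,…,X_n] nonzero polynomials. Assume (q-1)·∑_{i=1}^k deg(H_i) < ∑_{j=1}^n (|V_{f_j}| - 1), where V_{f_j} = {f_j(c) : c ∈ F}. If the system H_i(f₁(X₁),…,f_n(X_n)) = 0, i = 1,…,k, has a solution in Fⁿ, then it has at least two distinct solutions in Fⁿ. -/
open Polynomial Finset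

lemma basis_eq {F : Type*} [Field F] [DecidableEq F] (A : Finset F) (a : F) :
    Lagrange.basis A id a = C (Lagrange.nodalWeight A id a) * Lagrange.nodal (A.erase a) id := by
  unfold Lagrange.basis Lagrange.nodalWeight Lagrange.basisDivisor Lagrange.nodal
  rw [prod_mul_distrib, map_prod]

lemma lem1 {F : Type*} [Field F] [DecidableEq F] (A : Finset F) (m : ℕ)
    (hm : m + 1 < A.card) :
    ∑ a ∈ A, a ^ m * Lagrange.nodalWeight A id a = 0 := by
  have hinj : Set.InjOn (id : F → F) A := Set.injOn_id _
  have hdeg : (X ^ m : F[X]).degree < A.card := by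
    refine lt_of_le_of_lt (degree_X_pow_le m) ?_
    exact_mod_cast Nat.lt_of_succ_lt hm
  have h := Lagrange.eq_interpolate (f := (X ^ m : F[X])) hinj hdeg
  have h2 := congrArg (fun p : F[X] => p.coeff (A.card - 1)) h
  simp only [Lagrange.interpolate_apply, finset_sum_coeff, coeff_X_pow] at h2
  have hne : A.card - 1 ≠ m := by omega
  rw [if_neg hne] at h2
  refine Eq.trans ?_ h2.symm
  apply Finset.sum_congr rfl
  intro a ha
  rw [basis_eq, coeff_C_mul, coeff_C_mul]
  have hmonic : (Lagrange.nodal (A.erase a) id).Monic := Lagrange.nodal_monic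
  have hnd : (Lagrange.nodal (A.erase a) id).natDegree = A.card - 1 := by
    rw [Lagrange.natDegree_nodal, card_erase_of_mem ha]
  have : (Lagrange.nodal (A.erase a) id).coeff (A.card - 1) = 1 := by
    rw [← hnd]; exact hmonic.coeff_natDegree
  rw [this, eval_pow, eval_X, id]
  ring

lemma lem2 {F : Type*} [Field F] [DecidableEq F] {n : ℕ} (A : Fin n → Finset F)
    (P : MvPolynomial (Fin n) F)
    (hdeg : P.totalDegree < ∑ j, ((A j).card - 1)) :
    ∑ y ∈ Fintype.piFinset A,
      (MvPolynomial.eval y P) * ∏ j, Lagrange.nodalWeight (A j) id (y j) = 0 := by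
  have key : ∀ y : Fin n → F, MvPolynomial.eval y P
      = ∑ d ∈ P.support, P.coeff d * ∏ j, y j ^ d j :=
    fun y => MvPolynomial.eval_eq' y P
  simp_rw [key, Finset.sum_mul]
  rw [Finset.sum_comm]
  refine Finset.sum_eq_zero fun d hd => ?_
  have hsum : ∑ j, d j ≤ P.totalDegree := by
    have := MvPolynomial.le_totalDegree hd
    rwa [Finsupp.sum_fintype] at this
    intro _; rfl
  have : ∃ j, d j + 1 < (A j).card := by
    by_contra hc
    push_neg at hc
    have : ∑ j, ((A j).card - 1) ≤ ∑ j : Fin n, d j :=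
      Finset.sum_le_sum fun j _ => by have := hc j; omega
    omega
  obtain ⟨j0, hj0⟩ := this
  have factored : ∑ y ∈ Fintype.piFinset A,
      P.coeff d * ((∏ j, y j ^ d j) * ∏ j, Lagrange.nodalWeight (A j) id (y j))
      = P.coeff d * ∏ j, (∑ a ∈ A j, a ^ d j * Lagrange.nodalWeight (A j) id a) := by
    rw [← Finset.mul_sum]
    congr 1
    rw [Finset.prod_univ_sum]
    refine Finset.sum_congr rfl fun y _ => ?_
    rw [← Finset.prod_mul_distrib]
  refine Eq.trans ?_ (factored.trans ?_)
  · refine Finset.sum_congr rfl fun y _ => by ring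
  · rw [Finset.prod_eq_zero (Finset.mem_univ j0) (lem1 _ _ hj0), mul_zero]

/-- Corollary 1 (first part): systems in value sets of univariate polynomials. -/
theorem stmt_2 (F : Type*) [Field F] [Fintype F] [DecidableEq F] (q n k : ℕ)
    (hq : Fintype.card F = q) (f : Fin n → Polynomial F)
    (H : Fin k → MvPolynomial (Fin n) F) (hH : ∀ i, H i ≠ 0)
    (hdeg : (q - 1) * ∑ i, (H i).totalDegree
      < ∑ j, ((Finset.univ.image fun c : F => (f j).eval c).card - 1))
    (hsol : ∃ x : Fin n → F,
      ∀ i, MvPolynomial.eval (fun j => (f j).eval (x j)) (H i) = 0) :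
    ∃ x y : Fin n → F, x ≠ y ∧
      (∀ i, MvPolynomial.eval (fun j => (f j).eval (x j)) (H i) = 0) ∧
      (∀ i, MvPolynomial.eval (fun j => (f j).eval (y j)) (H i) = 0) := by
  classical
  obtain ⟨x₀, hx₀⟩ := hsol
  set A : Fin n → Finset F := fun j => Finset.univ.image fun c : F => (f j).eval c with hA
  have hq2 : 2 ≤ q := hq ▸ Fintype.one_lt_card
  set P : MvPolynomial (Fin n) F := ∏ i, (1 - (H i) ^ (q - 1)) with hP
  -- degree bound
  have hPdeg : P.totalDegree < ∑ j, ((A j).card - 1) := by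
    refine lt_of_le_of_lt ?_ hdeg
    refine le_trans (MvPolynomial.totalDegree_finset_prod _ _) ?_
    rw [Finset.mul_sum]
    refine Finset.sum_le_sum fun i _ => ?_
    refine le_trans (MvPolynomial.totalDegree_sub _ _) ?_
    simp only [MvPolynomial.totalDegree_one, max_le_iff, Nat.zero_le, true_and]
    exact le_trans (MvPolynomial.totalDegree_pow _ _) (le_refl _)
  -- evaluation of P
  have hPeval : ∀ y : Fin n → F,
      MvPolynomial.eval y P = ∏ i, (1 - (MvPolynomial.eval y (H i)) ^ (q - 1)) := by
    intro y; rw [hP, map_prod]; simp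
  have hPone : ∀ y : Fin n → F, (∀ i, MvPolynomial.eval y (H i) = 0) →
      MvPolynomial.eval y P = 1 := by
    intro y hy
    rw [hPeval]
    refine Finset.prod_eq_one fun i _ => ?_
    rw [hy i, zero_pow (by omega), sub_zero]
  have hPzero : ∀ y : Fin n → F, ¬ (∀ i, MvPolynomial.eval y (H i) = 0) →
      MvPolynomial.eval y P = 0 := by
    intro y hy
    push_neg at hy
    obtain ⟨i, hi⟩ := hy
    rw [hPeval]
    refine Finset.prod_eq_zero (Finset.mem_univ i) ?_
    rw [← hq, FiniteField.pow_card_sub_one_eq_one _ hi, sub_self]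
  -- the weighted sum over solutions in the grid
  set w : (Fin n → F) → F := fun y => ∏ j, Lagrange.nodalWeight (A j) id (y j) with hw
  set S : Finset (Fin n → F) :=
    (Fintype.piFinset A).filter (fun y => ∀ i, MvPolynomial.eval y (H i) = 0) with hS
  have hsumS : ∑ y ∈ S, w y = 0 := by
    have h2 := lem2 A P hPdeg
    rw [← h2, hS, Finset.sum_filter]
    refine Finset.sum_congr rfl fun y _ => ?_
    by_cases hy : ∀ i, MvPolynomial.eval y (H i) = 0
    · rw [if_pos hy, hPone y hy, one_mul]
    · rw [if_neg hy, hPzero y hy, zero_mul]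
  have hwne : ∀ y ∈ Fintype.piFinset A, w y ≠ 0 := by
    intro y hy
    refine Finset.prod_ne_zero_iff.mpr fun j _ => ?_
    exact Lagrange.nodalWeight_ne_zero (Set.injOn_id _) (Fintype.mem_piFinset.mp hy j)
  set y₀ : Fin n → F := fun j => (f j).eval (x₀ j) with hy₀
  have hy₀grid : y₀ ∈ Fintype.piFinset A := by
    refine Fintype.mem_piFinset.mpr fun j => ?_
    exact Finset.mem_image.mpr ⟨x₀ j, Finset.mem_univ _, rfl⟩
  have hy₀S : y₀ ∈ S := Finset.mem_filter.mpr ⟨hy₀grid, hx₀⟩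
  -- there is another grid solution
  have : ∃ y₁ ∈ S, y₁ ≠ y₀ := by
    by_contra hc
    push_neg at hc
    have hSeq : S = {y₀} := by
      apply Finset.eq_singleton_iff_unique_mem.mpr
      exact ⟨hy₀S, hc⟩
    rw [hSeq, Finset.sum_singleton] at hsumS
    exact hwne y₀ hy₀grid hsumS
  obtain ⟨y₁, hy₁S, hy₁ne⟩ := this
  have hy₁grid : y₁ ∈ Fintype.piFinset A := (Finset.mem_filter.mp hy₁S).1
  have hy₁sol : ∀ i, MvPolynomial.eval y₁ (H i) = 0 := (Finset.mem_filter.mp hy₁S).2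
  have hchoice : ∀ j, ∃ c : F, (f j).eval c = y₁ j := by
    intro j
    obtain ⟨c, _, hc⟩ := Finset.mem_image.mp (Fintype.mem_piFinset.mp hy₁grid j)
    exact ⟨c, hc⟩
  choose x₁ hx₁ using hchoice
  refine ⟨x₀, x₁, ?_, hx₀, ?_⟩
  · intro hxy
    apply hy₁ne
    funext j
    rw [← hx₁ j, ← hxy]
  · intro i
    have : (fun j => (f j).eval (x₁ j)) = y₁ := funext hx₁
    rw [this]
    exact hy₁sol i
end

section
/- Let F be a finite field with q elements, f₁,…,f_n ∈ F[X] polynomials without constant term, and H₁,…,H_k ∈ F[X₁,…,X_n] nonzero polynomials without constant term. If (q-1)·∑_{i=1}^k deg(H_i) < ∑_{j=1}^n (|V_{f_j}| - 1), then the system H_i(f₁(X₁),…,f_n(X_n)) = 0, i = 1,…,k, has a nontrivial solution in Fⁿ, i.e., a solution other than (0,…,0). -/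
open Finset Polynomial

lemma basis_coeff {F : Type*} [Field F] [DecidableEq F] (S : Finset F) (s : F) (hs : s ∈ S) :
    (Lagrange.basis S id s).coeff (S.card - 1) = (∏ t ∈ S.erase s, (s - t))⁻¹ := by
  have hinj : Set.InjOn id (S : Set F) := fun a _ b _ h => h
  rw [← Lagrange.natDegree_basis hinj hs]
  show (Lagrange.basis S id s).leadingCoeff = _
  rw [Lagrange.basis, leadingCoeff_prod, ← prod_inv_distrib]
  refine prod_congr rfl fun t ht => ?_
  rw [Lagrange.basisDivisor, leadingCoeff_mul, leadingCoeff_C, leadingCoeff_X_sub_C, mul_one]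
  rfl

lemma key1 {F : Type*} [Field F] [DecidableEq F] (S : Finset F) (d : ℕ) (hd : d < S.card - 1) :
    ∑ s ∈ S, (∏ t ∈ S.erase s, (s - t))⁻¹ * s ^ d = 0 := by
  have hinj : Set.InjOn id (S : Set F) := fun a _ b _ h => h
  have hdeg : ((X : F[X]) ^ d).degree < S.card := by
    rw [degree_X_pow]
    exact_mod_cast (by omega : d < S.card)
  have h := Lagrange.eq_interpolate (v := id) hinj hdeg
  have hc := congrArg (fun p : F[X] => p.coeff (S.card - 1)) h
  simp only [Lagrange.interpolate_apply, finset_sum_coeff, coeff_C_mul, coeff_X_pow,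
    eval_pow, eval_X, id] at hc
  rw [if_neg (by omega : ¬ S.card - 1 = d)] at hc
  rw [show (0:F) = ∑ x ∈ S, x ^ d * (Lagrange.basis S id x).coeff (S.card - 1) from hc]
  refine sum_congr rfl fun s hs => ?_
  rw [basis_coeff S s hs, mul_comm]

lemma key2 {F : Type*} [Field F] [DecidableEq F] {n : ℕ} (V : Fin n → Finset F)
    (g : MvPolynomial (Fin n) F)
    (hsupp : ∀ m ∈ g.support, ∃ j, m j < (V j).card - 1) :
    ∑ y ∈ Fintype.piFinset V,
      (∏ j, (∏ t ∈ (V j).erase (y j), (y j - t))⁻¹) * MvPolynomial.eval y g = 0 := by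
  have step : ∀ y : Fin n → F,
      (∏ j, (∏ t ∈ (V j).erase (y j), (y j - t))⁻¹) * MvPolynomial.eval y g
      = ∑ m ∈ g.support, MvPolynomial.coeff m g *
          ∏ j, ((∏ t ∈ (V j).erase (y j), (y j - t))⁻¹ * (y j) ^ (m j)) := by
    intro y
    rw [MvPolynomial.eval_eq', mul_sum]
    refine sum_congr rfl fun m hm => ?_
    rw [prod_mul_distrib, mul_left_comm]
  calc ∑ y ∈ Fintype.piFinset V,
        (∏ j, (∏ t ∈ (V j).erase (y j), (y j - t))⁻¹) * MvPolynomial.eval y g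
      = ∑ m ∈ g.support, MvPolynomial.coeff m g *
          ∑ y ∈ Fintype.piFinset V, ∏ j, ((∏ t ∈ (V j).erase (y j), (y j - t))⁻¹ * (y j) ^ (m j)) := by
        simp only [step, mul_sum]
        exact Finset.sum_comm
    _ = 0 := by
        refine Finset.sum_eq_zero fun m hm => ?_
        rw [← Finset.prod_univ_sum V (fun j s => (∏ t ∈ (V j).erase s, (s - t))⁻¹ * s ^ (m j))]
        obtain ⟨j, hj⟩ := hsupp m hm
        rw [Finset.prod_eq_zero (mem_univ j) (key1 (V j) (m j) hj), mul_zero]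

/-- Corollary 1 (second part): nontrivial solutions when there are no constant terms. -/
theorem stmt_3 (F : Type*) [Field F] [Fintype F] [DecidableEq F] (q n k : ℕ)
    (hq : Fintype.card F = q) (f : Fin n → Polynomial F) (hf0 : ∀ j, (f j).eval 0 = 0)
    (H : Fin k → MvPolynomial (Fin n) F) (hH : ∀ i, H i ≠ 0)
    (hH0 : ∀ i, MvPolynomial.eval (fun _ => (0 : F)) (H i) = 0)
    (hdeg : (q - 1) * ∑ i, (H i).totalDegree
      < ∑ j, ((Finset.univ.image fun c : F => (f j).eval c).card - 1)) :
    ∃ x : Fin n → F, x ≠ 0 ∧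
      ∀ i, MvPolynomial.eval (fun j => (f j).eval (x j)) (H i) = 0 := by
  by_contra hcon
  push_neg at hcon
  set V : Fin n → Finset F := fun j => Finset.univ.image fun c : F => (f j).eval c with hV
  set g : MvPolynomial (Fin n) F := ∏ i, (1 - H i ^ (q - 1)) with hg
  have hq2 : 1 < q := hq ▸ Fintype.one_lt_card
  have h0V : ∀ j, (0 : F) ∈ V j := fun j => mem_image.mpr ⟨0, mem_univ 0, hf0 j⟩
  -- total degree bound
  have hgdeg : g.totalDegree ≤ (q - 1) * ∑ i, (H i).totalDegree := by
    refine le_trans (MvPolynomial.totalDegree_finset_prod _ _) ?_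
    rw [Finset.mul_sum]
    refine Finset.sum_le_sum fun i _ => ?_
    rw [sub_eq_add_neg]
    refine le_trans (MvPolynomial.totalDegree_add _ _) (max_le ?_ ?_)
    · simp
    · rw [MvPolynomial.totalDegree_neg]
      exact MvPolynomial.totalDegree_pow _ _
  have hsupp : ∀ m ∈ g.support, ∃ j, m j < (V j).card - 1 := by
    intro m hm
    by_contra hno
    push_neg at hno
    have h1 : ∑ j, ((V j).card - 1) ≤ ∑ j, m j := Finset.sum_le_sum fun j _ => hno j
    have h2 : ∑ j, m j ≤ g.totalDegree := by
      rw [← Finsupp.sum_fintype m (fun _ e => e) (fun _ => rfl)]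
      exact MvPolynomial.le_totalDegree hm
    have hdeg' : (q - 1) * ∑ i, (H i).totalDegree < ∑ j, ((V j).card - 1) := hdeg
    omega
  -- evaluation of g
  have hBzero : MvPolynomial.eval (fun _ => (0:F)) g = 1 := by
    rw [hg, map_prod]
    refine Finset.prod_eq_one fun i _ => ?_
    rw [map_sub, map_one, map_pow, hH0 i, zero_pow (by omega), sub_zero]
  have hBne : ∀ y : Fin n → F, (∃ i, MvPolynomial.eval y (H i) ≠ 0) →
      MvPolynomial.eval y g = 0 := by
    rintro y ⟨i, hi⟩
    rw [hg, map_prod]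
    refine Finset.prod_eq_zero (mem_univ i) ?_
    rw [map_sub, map_one, map_pow, ← hq, FiniteField.pow_card_sub_one_eq_one _ hi, sub_self]
  -- every nonzero grid point is a non-solution
  have hsol : ∀ y ∈ Fintype.piFinset V, y ≠ 0 → ∃ i, MvPolynomial.eval y (H i) ≠ 0 := by
    intro y hy hy0
    have hex : ∀ j, ∃ c : F, (f j).eval c = y j := by
      intro j
      obtain ⟨c, _, hc⟩ := mem_image.mp (Fintype.mem_piFinset.mp hy j)
      exact ⟨c, hc⟩
    choose x hx using hex
    have hxne : x ≠ 0 := by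
      intro h
      apply hy0
      funext j
      rw [← hx j, h]
      exact hf0 j
    obtain ⟨i, hi⟩ := hcon x hxne
    refine ⟨i, ?_⟩
    rwa [show (fun j => (f j).eval (x j)) = y from funext hx] at hi
  -- the weighted sum
  set w : (Fin n → F) → F := fun y => ∏ j, (∏ t ∈ (V j).erase (y j), (y j - t))⁻¹ with hw
  have hA : ∑ y ∈ Fintype.piFinset V, w y * MvPolynomial.eval y g = 0 := key2 V g hsupp
  have hw0 : w 0 ≠ 0 := by
    rw [hw]
    refine Finset.prod_ne_zero_iff.mpr fun j _ => ?_
    refine inv_ne_zero (Finset.prod_ne_zero_iff.mpr fun t ht => ?_)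
    have := Finset.ne_of_mem_erase ht
    intro h
    exact this (by simpa [Pi.zero_apply, sub_eq_zero] using h.symm)
  have hsum : ∑ y ∈ Fintype.piFinset V, w y * MvPolynomial.eval y g = w 0 := by
    rw [Finset.sum_congr rfl (fun y hy => show w y * MvPolynomial.eval y g
        = if y = 0 then w 0 else 0 from ?_)]
    · have h0mem : (0 : Fin n → F) ∈ Fintype.piFinset V :=
        Fintype.mem_piFinset.mpr fun j => h0V j
      rw [Finset.sum_ite_eq' (Fintype.piFinset V) 0 (fun _ => w 0), if_pos h0mem]
    · by_cases h : y = 0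
      · subst h
        rw [if_pos rfl]
        rw [show MvPolynomial.eval (0 : Fin n → F) g = 1 from hBzero, mul_one]
      · rw [if_neg h, hBne y (hsol y hy h), mul_zero]
  rw [hA] at hsum
  exact hw0 hsum.symm
end

section
/- Let F be a finite field with q elements and f₁,…,f_n ∈ F[X] nonconstant polynomials. Assume ⌊(q-1)/deg(f₁)⌋ + … + ⌊(q-1)/deg(f_n)⌋ > q - 1. If the equation f₁(X₁) + … + f_n(X_n) = 0 has a solution in Fⁿ, then it has at least two distinct solutions in Fⁿ. -/
open Finset Polynomial

/-- Sum over all field elements of the values of a polynomial of degree `< q - 1` vanishes. -/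
lemma aux_sum_eval_eq_zero {F : Type*} [Field F] [Fintype F]
    (h : Polynomial F) (hh : h.natDegree < Fintype.card F - 1) :
    ∑ t : F, h.eval t = 0 := by
  classical
  calc ∑ t : F, h.eval t
      = ∑ t : F, ∑ i ∈ Finset.range (h.natDegree + 1), h.coeff i * t ^ i := by
        refine Finset.sum_congr rfl fun t _ => ?_
        exact Polynomial.eval_eq_sum_range t
    _ = ∑ i ∈ Finset.range (h.natDegree + 1), h.coeff i * ∑ t : F, t ^ i := by
        rw [Finset.sum_comm]
        simp [Finset.mul_sum]
    _ = 0 := by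
        refine Finset.sum_eq_zero fun i hi => ?_
        rw [FiniteField.sum_pow_lt_card_sub_one, mul_zero]
        have := Finset.mem_range.mp hi
        omega

/-- Corollary 2 (first part). -/
theorem stmt_4 (F : Type*) [Field F] [Fintype F] (q n : ℕ) (hq : Fintype.card F = q)
    (f : Fin n → Polynomial F) (hf : ∀ j, 0 < (f j).natDegree)
    (hdeg : q - 1 < ∑ j, (q - 1) / (f j).natDegree)
    (hsol : ∃ x : Fin n → F, ∑ j, (f j).eval (x j) = 0) :
    ∃ x y : Fin n → F, x ≠ y ∧ ∑ j, (f j).eval (x j) = 0 ∧ ∑ j, (f j).eval (y j) = 0 := by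
  classical
  obtain ⟨x₀, hx₀⟩ := hsol
  have hq2 : 2 ≤ q := hq ▸ Fintype.one_lt_card
  have hn : n ≠ 0 := by
    rintro rfl
    simp at hdeg
  -- The full power sum vanishes
  have hS : ∑ x : Fin n → F, (∑ j, (f j).eval (x j)) ^ (q - 1) = 0 := by
    have expand : ∀ x : Fin n → F, (∑ j, (f j).eval (x j)) ^ (q - 1)
        = ∑ k ∈ Finset.piAntidiag Finset.univ (q - 1),
            (Nat.multinomial Finset.univ k : F) * ∏ j, (f j).eval (x j) ^ k j := fun x =>
      Finset.sum_pow_eq_sum_piAntidiag Finset.univ _ (q - 1)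
    simp_rw [expand]
    rw [Finset.sum_comm]
    refine Finset.sum_eq_zero fun k hk => ?_
    rw [← Finset.mul_sum]
    have hfub : ∑ x : Fin n → F, ∏ j, (f j).eval (x j) ^ k j
        = ∏ j, ∑ t : F, (f j).eval t ^ k j := by
      rw [Fintype.prod_sum fun j t => (f j).eval t ^ k j]
    rw [hfub]
    -- find a coordinate with small exponent
    have hksum : ∑ j, k j = q - 1 := ((Finset.mem_piAntidiag.mp hk)).1
    have hj : ∃ j, k j < (q - 1) / (f j).natDegree := by
      by_contra hc
      push_neg at hc
      have : ∑ j, (q - 1) / (f j).natDegree ≤ ∑ j, k j :=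
        Finset.sum_le_sum fun j _ => hc j
      omega
    obtain ⟨j, hj⟩ := hj
    have hdj : 1 ≤ (f j).natDegree := hf j
    have hsmall : k j * (f j).natDegree < q - 1 := by
      have h1 : (k j + 1) * (f j).natDegree ≤ ((q - 1) / (f j).natDegree) * (f j).natDegree :=
        Nat.mul_le_mul_right _ hj
      have h2 : ((q - 1) / (f j).natDegree) * (f j).natDegree ≤ q - 1 :=
        Nat.div_mul_le_self _ _
      have h3 : (k j + 1) * (f j).natDegree = k j * (f j).natDegree + (f j).natDegree := by ring
      linarith
    have hz : ∑ t : F, (f j).eval t ^ k j = 0 := by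
      have : ∑ t : F, (f j).eval t ^ k j = ∑ t : F, ((f j) ^ k j).eval t := by
        simp [Polynomial.eval_pow]
      rw [this]
      refine aux_sum_eval_eq_zero _ ?_
      have : ((f j) ^ k j).natDegree ≤ k j * (f j).natDegree :=
        Polynomial.natDegree_pow_le
      rw [hq]
      omega
    rw [Finset.prod_eq_zero (Finset.mem_univ j) hz, mul_zero]
  -- count solutions mod p
  set Sol : Finset (Fin n → F) :=
    Finset.univ.filter (fun x : Fin n → F => ∑ j, (f j).eval (x j) = 0) with hSolDef
  have hcast : (Sol.card : F) = 0 := by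
    have hind : ∑ x : Fin n → F, (1 - (∑ j, (f j).eval (x j)) ^ (q - 1)) = (Sol.card : F) := by
      rw [← Finset.sum_filter_add_sum_filter_not Finset.univ
        (fun x : Fin n → F => ∑ j, (f j).eval (x j) = 0)]
      have h1 : ∑ x ∈ Sol, (1 - (∑ j, (f j).eval (x j)) ^ (q - 1)) = (Sol.card : F) := by
        rw [Finset.sum_congr rfl (fun x hx => ?_), Finset.sum_const, nsmul_eq_mul, mul_one]
        have hx0 : ∑ j, (f j).eval (x j) = 0 := (Finset.mem_filter.mp hx).2
        rw [hx0, zero_pow (by omega), sub_zero]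
      have h2 : ∑ x ∈ Finset.univ.filter
          (fun x : Fin n → F => ¬ ∑ j, (f j).eval (x j) = 0),
          (1 - (∑ j, (f j).eval (x j)) ^ (q - 1)) = 0 := by
        refine Finset.sum_eq_zero fun x hx => ?_
        have hx0 : ∑ j, (f j).eval (x j) ≠ 0 := (Finset.mem_filter.mp hx).2
        rw [← hq, FiniteField.pow_card_sub_one_eq_one _ hx0, sub_self]
      rw [h1, h2, add_zero]
    have hqF : (q : F) = 0 := hq ▸ FiniteField.cast_card_eq_zero F
    have hall : ∑ x : Fin n → F, (1 - (∑ j, (f j).eval (x j)) ^ (q - 1)) = 0 := by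
      rw [Finset.sum_sub_distrib, hS, sub_zero, Finset.sum_const, nsmul_eq_mul, mul_one,
        Finset.card_univ, Fintype.card_fun, hq, Fintype.card_fin, Nat.cast_pow, hqF,
        zero_pow hn]
    rw [← hind, hall]
  have hx₀mem : x₀ ∈ Sol := Finset.mem_filter.mpr ⟨Finset.mem_univ _, hx₀⟩
  have hone : 1 < Sol.card := by
    have hpos : 1 ≤ Sol.card := Finset.card_pos.mpr ⟨x₀, hx₀mem⟩
    have hne : Sol.card ≠ 1 := by
      intro h
      rw [h] at hcast
      simp at hcast
    omega
  obtain ⟨a, ha, b, hb, hab⟩ := Finset.one_lt_card.mp hone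
  exact ⟨a, b, hab, (Finset.mem_filter.mp ha).2, (Finset.mem_filter.mp hb).2⟩
end

section
/- Let F be a finite field with q elements, m₁,…,m_n positive integers, b₁,…,b_n ∈ F nonzero, and c ∈ F. Set d_j = gcd(m_j, q-1). Assume 1/d₁ + … + 1/d_n > 1. If the diagonal equation b₁X₁^{m₁} + … + b_nX_n^{m_n} = c has a solution in Fⁿ, then it has at least two distinct solutions in Fⁿ. -/
open Finset Pointwise


/-- Scherk's theorem: if `0` has a unique representation as `a + b`, then
`|A+B| ≥ |A| + |B| - 1`. -/
lemma scherk_aux {G : Type*} [AddCommGroup G] [Fintype G] [DecidableEq G] :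
    ∀ (N : ℕ) (B A : Finset G), B.card ≤ N → 0 ∈ A → 0 ∈ B →
      (∀ a ∈ A, ∀ b ∈ B, a + b = 0 → a = 0 ∧ b = 0) →
      A.card + B.card ≤ (A + B).card + 1 := by
  intro N
  induction N with
  | zero =>
    intro B A hBN hA hB _
    exact absurd (Finset.card_pos.mpr ⟨0, hB⟩) (by omega)
  | succ N ih =>
    intro B A hBN hA hB huniq
    by_cases hcase : ∃ e ∈ A, e ≠ 0 ∧ ∃ b₀ ∈ B, b₀ + e ∉ A
    · obtain ⟨e, heA, he0, b₀, hb₀B, hb₀⟩ := hcase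
      set Be : Finset G := B.image (· + e) with hBedef
      set A' : Finset G := A ∪ Be with hA'def
      set B' : Finset G := B ∩ (A.image (fun a => a - e)) with hB'def
      have hcardBe : Be.card = B.card := Finset.card_image_of_injective _ (add_left_injective e)
      -- card B' = card (Be ∩ A)
      have hcardB' : B'.card = (Be ∩ A).card := by
        apply Finset.card_bij (fun x _ => x + e)
        · intro x hx
          rw [hB'def] at hx
          obtain ⟨hxB, hxA⟩ := Finset.mem_inter.mp hx
          obtain ⟨a, haA, ha⟩ := Finset.mem_image.mp hxA
          refine Finset.mem_inter.mpr ⟨Finset.mem_image_of_mem _ hxB, ?_⟩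
          have : x + e = a := by rw [← ha]; abel
          rwa [this]
        · intro x hx y hy h
          exact by simpa using h
        · intro y hy
          obtain ⟨hyBe, hyA⟩ := Finset.mem_inter.mp hy
          obtain ⟨x, hxB, hx⟩ := Finset.mem_image.mp hyBe
          refine ⟨x, ?_, hx⟩
          rw [hB'def]
          refine Finset.mem_inter.mpr ⟨hxB, Finset.mem_image.mpr ⟨y, hyA, ?_⟩⟩
          rw [← hx]; abel
      have hcards : A'.card + B'.card = A.card + B.card := by
        have h1 := Finset.card_union_add_card_inter A Be
        rw [hcardB', hA'def, Finset.inter_comm Be A]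
        omega
      have hsub : A' + B' ⊆ A + B := by
        intro z hz
        obtain ⟨a', ha', b', hb', rfl⟩ := Finset.mem_add.mp hz
        obtain ⟨hb'B, hb'A⟩ := Finset.mem_inter.mp hb'
        rcases Finset.mem_union.mp ha' with haA | haBe
        · exact Finset.add_mem_add haA hb'B
        · obtain ⟨bb, hbbB, rfl⟩ := Finset.mem_image.mp haBe
          obtain ⟨a, haA, ha⟩ := Finset.mem_image.mp hb'A
          have hthis : bb + e + b' = a + bb := by rw [← ha]; abel
          rw [hthis]
          exact Finset.add_mem_add haA hbbB
      have h0A' : (0 : G) ∈ A' := Finset.mem_union_left _ hA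
      have h0B' : (0 : G) ∈ B' := by
        refine Finset.mem_inter.mpr ⟨hB, Finset.mem_image.mpr ⟨e, heA, by abel⟩⟩
      have hB'lt : B'.card < B.card := by
        apply Finset.card_lt_card
        refine ⟨Finset.inter_subset_left, fun hsub2 => ?_⟩
        have : b₀ ∈ B' := hsub2 hb₀B
        obtain ⟨a, haA, ha⟩ := Finset.mem_image.mp (Finset.mem_inter.mp this).2
        apply hb₀
        have : b₀ + e = a := by rw [← ha]; abel
        rwa [this]
      have huniq' : ∀ a' ∈ A', ∀ b' ∈ B', a' + b' = 0 → a' = 0 ∧ b' = 0 := by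
        intro a' ha' b' hb' hab
        obtain ⟨hb'B, hb'A⟩ := Finset.mem_inter.mp hb'
        rcases Finset.mem_union.mp ha' with haA | haBe
        · exact huniq a' haA b' hb'B hab
        · obtain ⟨bb, hbbB, rfl⟩ := Finset.mem_image.mp haBe
          obtain ⟨a, haA, ha⟩ := Finset.mem_image.mp hb'A
          have hba : a + bb = 0 := by
            rw [← ha] at hab
            rw [← hab]; abel
          obtain ⟨ha0, hbb0⟩ := huniq a haA bb hbbB hba
          have hb'e : e + b' = 0 := by
            rw [← ha, ha0]; abel
          exact absurd (huniq e heA b' hb'B hb'e).1 he0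
      have := ih B' A' (by omega) h0A' h0B' huniq'
      calc A.card + B.card = A'.card + B'.card := hcards.symm
        _ ≤ (A' + B').card + 1 := this
        _ ≤ (A + B).card + 1 := by
            have := Finset.card_le_card hsub
            omega
    · push_neg at hcase
      have hABsub : A ∪ B ⊆ A + B := by
        intro x hx
        rcases Finset.mem_union.mp hx with h | h
        · simpa using Finset.add_mem_add h hB
        · simpa using Finset.add_mem_add hA h
      have hint : A ∩ B ⊆ {0} := by
        intro x hx
        obtain ⟨hxA, hxB⟩ := Finset.mem_inter.mp hx
        rw [Finset.mem_singleton]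
        by_contra hx0
        set o := addOrderOf x with ho
        have hopos : 0 < o := addOrderOf_pos x
        have ho1 : o ≠ 1 := by
          intro h
          exact hx0 (AddMonoid.addOrderOf_eq_one_iff.mp h)
        have ho2 : 2 ≤ o := by omega
        have key : ∀ k, 1 ≤ k → k < o → k • x ∈ A := by
          intro k
          induction k with
          | zero => omega
          | succ k ihk =>
            intro _ hlt
            rcases Nat.eq_zero_or_pos k with h0 | h1
            · subst h0; simpa using hxA
            · have hk : k • x ∈ A := ihk h1 (by omega)
              have hkne : k • x ≠ 0 := by
                intro h
                have : o ∣ k := addOrderOf_dvd_of_nsmul_eq_zero h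
                have := Nat.le_of_dvd h1 this
                omega
              have := hcase (k • x) hk hkne x hxB
              rw [succ_nsmul, add_comm]
              exact this
        have ha : (o - 1) • x ∈ A := key (o - 1) (by omega) (by omega)
        have hsum : (o - 1) • x + x = 0 := by
          rw [← succ_nsmul]
          have : o - 1 + 1 = o := by omega
          rw [this, ho]
          exact addOrderOf_nsmul_eq_zero x
        have h0 := (huniq _ ha x hxB hsum).1
        have : o ∣ (o - 1) := addOrderOf_dvd_of_nsmul_eq_zero h0
        have := Nat.le_of_dvd (by omega) this
        omega
      have h1 : (A ∩ B).card ≤ 1 := by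
        simpa using Finset.card_le_card hint
      have h2 := Finset.card_union_add_card_inter A B
      have h3 := Finset.card_le_card hABsub
      omega

/-- Weak Morlaye–Joly theorem for diagonal equations. -/
theorem stmt_7 (F : Type*) [Field F] [Fintype F] (q n : ℕ) (hq : Fintype.card F = q)
    (m : Fin n → ℕ) (hm : ∀ j, 0 < m j) (b : Fin n → F) (hb : ∀ j, b j ≠ 0) (c : F)
    (hineq : (1 : ℚ) < ∑ j, (1 : ℚ) / Nat.gcd (m j) (q - 1))
    (hsol : ∃ x : Fin n → F, ∑ j, b j * x j ^ m j = c) :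
    ∃ x y : Fin n → F, x ≠ y ∧ ∑ j, b j * x j ^ m j = c ∧ ∑ j, b j * y j ^ m j = c := by
  classical
  by_contra hcon
  push_neg at hcon
  obtain ⟨x0, hx0⟩ := hsol
  have huniq : ∀ y : Fin n → F, (∑ j, b j * y j ^ m j) = c → y = x0 := by
    intro y hy
    by_contra hne
    exact hcon y x0 hne hy hx0
  have hq2 : 2 ≤ q := hq ▸ Fintype.one_lt_card
  set d : Fin n → ℕ := fun j => Nat.gcd (m j) (q - 1) with hd
  have hd1 : ∀ j, 1 ≤ d j := fun j => Nat.gcd_pos_of_pos_left _ (hm j)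
  have hdvd : ∀ j, d j ∣ q - 1 := fun j => Nat.gcd_dvd_right _ _
  have hdm : ∀ j, d j ∣ m j := fun j => Nat.gcd_dvd_left _ _
  have hcardU : Fintype.card Fˣ = q - 1 := by rw [Fintype.card_units, hq]
  have hn2 : 2 ≤ n := by
    have hsum_le : (∑ j, (1:ℚ) / (d j)) ≤ n := by
      calc (∑ j, (1:ℚ) / (d j)) ≤ ∑ _j : Fin n, (1:ℚ) := by
            apply Finset.sum_le_sum
            intro j _
            rw [div_le_one (by exact_mod_cast hd1 j)]
            exact_mod_cast hd1 j
        _ = n := by simp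
    have h1n : 1 < n := by exact_mod_cast lt_of_lt_of_le hineq hsum_le
    omega
  have hsplit : ∀ (j : Fin n) (z : Fin n → F),
      ∑ l, b l * z l ^ m l = b j * z j ^ m j + ∑ l ∈ Finset.univ.erase j, b l * z l ^ m l :=
    fun j z => (Finset.add_sum_erase _ _ (Finset.mem_univ j)).symm
  by_cases hcase1 : ∃ j, x0 j ≠ 0 ∧ 2 ≤ d j
  · -- Case I : a coordinate is nonzero with d_j ≥ 2 : rotate it by a d_j-th root of unity
    obtain ⟨j, hxj, hdj⟩ := hcase1
    obtain ⟨g, hg⟩ := IsCyclic.exists_generator (α := Fˣ)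
    have hog : orderOf g = q - 1 := by
      rw [orderOf_eq_card_of_forall_mem_zpowers hg, Nat.card_eq_fintype_card, hcardU]
    obtain ⟨t, ht⟩ := hdvd j
    have htpos : 0 < t := by
      rcases Nat.eq_zero_or_pos t with rfl | h
      · rw [Nat.mul_zero] at ht; omega
      · exact h
    set ζ : Fˣ := g ^ ((q - 1) / d j) with hζ
    have hqd : (q - 1) / d j = t := by rw [ht, Nat.mul_div_cancel_left _ (hd1 j)]
    have hoζ : orderOf ζ = d j := by
      rw [hζ, orderOf_pow, hog, hqd, ht, Nat.gcd_eq_right (dvd_mul_left t (d j)),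
        Nat.mul_div_cancel _ htpos]
    have hζ1 : (ζ : F) ≠ 1 := by
      intro h
      have : ζ = 1 := Units.ext (by simpa using h)
      rw [this, orderOf_one] at hoζ
      omega
    have hζm : (ζ : F) ^ (m j) = 1 := by
      have h1 : ζ ^ (m j) = 1 := orderOf_dvd_iff_pow_eq_one.mp (hoζ ▸ hdm j)
      have := congrArg (Units.val) h1
      simpa using this
    set y := Function.update x0 j ((ζ : F) * x0 j) with hy
    have hysol : ∑ l, b l * y l ^ m l = c := by
      rw [hsplit j y]
      have h1 : y j = (ζ : F) * x0 j := Function.update_self _ _ _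
      have h2 : ∑ l ∈ Finset.univ.erase j, b l * y l ^ m l
          = ∑ l ∈ Finset.univ.erase j, b l * x0 l ^ m l := by
        apply Finset.sum_congr rfl
        intro l hl
        rw [hy, Function.update_of_ne (Finset.ne_of_mem_erase hl)]
      rw [h1, h2, mul_pow, hζm, one_mul, ← hsplit j x0, hx0]
    have hyne : y ≠ x0 := by
      intro h
      have := congrFun h j
      rw [hy, Function.update_self] at this
      exact hζ1 (mul_right_cancel₀ hxj (by rw [this, one_mul]))
    exact hyne (huniq y hysol)
  · push_neg at hcase1
    by_cases hcase2 : ∃ j, d j = 1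
    · -- Case II : some exponent is bijective; move another coordinate and resolve
      obtain ⟨j, hj1⟩ := hcase2
      have hinj : Function.Injective (fun u : Fˣ => u ^ m j) := by
        intro u v huv
        simp only at huv
        have h1 : (u * v⁻¹) ^ m j = 1 := by
          rw [mul_pow, inv_pow, huv, mul_inv_cancel]
        have h2 : orderOf (u * v⁻¹) ∣ m j := orderOf_dvd_iff_pow_eq_one.mpr h1
        have h3 : orderOf (u * v⁻¹) ∣ q - 1 := hcardU ▸ orderOf_dvd_card
        have h4 : orderOf (u * v⁻¹) ∣ d j := Nat.dvd_gcd h2 h3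
        rw [hj1, Nat.dvd_one] at h4
        have h5 : u * v⁻¹ = 1 := orderOf_eq_one_iff.mp h4
        rw [mul_inv_eq_one] at h5
        exact h5
      have hsurjU : Function.Surjective (fun u : Fˣ => u ^ m j) :=
        Finite.injective_iff_surjective.mp hinj
      have hsurj : ∀ w : F, ∃ t : F, b j * t ^ m j = w := by
        intro w
        rcases eq_or_ne w 0 with rfl | hw
        · exact ⟨0, by rw [zero_pow (hm j).ne', mul_zero]⟩
        · obtain ⟨v, hv⟩ := hsurjU (Units.mk0 (w / b j) (div_ne_zero hw (hb j)))
          refine ⟨(v : F), ?_⟩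
          have h1 : ((v : F)) ^ m j = w / b j := by
            have := congrArg Units.val hv
            simpa using this
          rw [h1, mul_comm, div_mul_cancel₀ _ (hb j)]
      have h0n : 0 < n := by omega
      have h1n : 1 < n := by omega
      set k : Fin n := if j = ⟨0, h0n⟩ then ⟨1, h1n⟩ else ⟨0, h0n⟩ with hk
      have hkj : k ≠ j := by
        rw [hk]
        split_ifs with h
        · rw [h]
          simp [Fin.ext_iff]
        · exact fun hh => h hh.symm
      obtain ⟨a, ha⟩ := exists_ne (x0 k)
      set z : Fin n → F := Function.update x0 k a with hz
      obtain ⟨t, htt⟩ := hsurj (c - ∑ l ∈ Finset.univ.erase j, b l * z l ^ m l)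
      set y : Fin n → F := Function.update z j t with hy
      have hysol : ∑ l, b l * y l ^ m l = c := by
        rw [hsplit j y]
        have h1 : y j = t := Function.update_self _ _ _
        have h2 : ∑ l ∈ Finset.univ.erase j, b l * y l ^ m l
            = ∑ l ∈ Finset.univ.erase j, b l * z l ^ m l := by
          apply Finset.sum_congr rfl
          intro l hl
          rw [hy, Function.update_of_ne (Finset.ne_of_mem_erase hl)]
        rw [h1, h2, htt]
        ring
      have hyne : y ≠ x0 := by
        intro h
        have := congrFun h k
        rw [hy, Function.update_of_ne hkj, hz, Function.update_self] at this
        exact ha this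
      exact hyne (huniq y hysol)
    · -- Case III : all d_j ≥ 2 and x0 = 0, c = 0 : sumset counting via Scherk
      push_neg at hcase2
      have hd2 : ∀ j, 2 ≤ d j := by
        intro j
        have := hd1 j
        have := hcase2 j
        omega
      have hx00 : ∀ j, x0 j = 0 := by
        intro j
        by_contra hne
        have := hcase1 j hne
        have := hd2 j
        omega
      have hc0 : c = 0 := by
        rw [← hx0]
        apply Finset.sum_eq_zero
        intro l _
        rw [hx00 l, zero_pow (hm l).ne', mul_zero]
      have huniq0 : ∀ y : Fin n → F, (∑ l, b l * y l ^ m l) = 0 → ∀ l, y l = 0 := by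
        intro y hy l
        have := huniq y (by rw [hy, hc0])
        rw [this]
        exact hx00 l
      set V : Fin n → Finset F := fun j => Finset.image (fun t => b j * t ^ m j) Finset.univ
        with hV
      have h0V : ∀ j, (0 : F) ∈ V j := by
        intro j
        rw [hV]
        exact Finset.mem_image.mpr ⟨0, Finset.mem_univ _, by
          rw [zero_pow (hm j).ne', mul_zero]⟩
      have hVpos : ∀ j, 1 ≤ (V j).card := fun j => Finset.card_pos.mpr ⟨0, h0V j⟩
      -- cardinality lower bound for V j
      have hVcard : ∀ j, ((q : ℚ) - 1) / (d j) ≤ ((V j).card : ℚ) - 1 := by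
        intro j
        set W : Finset F := (V j).erase 0 with hW
        have hWc : W.card = (V j).card - 1 := Finset.card_erase_of_mem (h0V j)
        have himg : (Finset.univ.erase (0 : F)).image (fun t => b j * t ^ m j) ⊆ W := by
          intro w hw
          obtain ⟨t, htmem, htw⟩ := Finset.mem_image.mp hw
          have ht0 : t ≠ 0 := Finset.ne_of_mem_erase htmem
          refine Finset.mem_erase.mpr ⟨?_, Finset.mem_image.mpr ⟨t, Finset.mem_univ _, htw⟩⟩
          rw [← htw]
          exact mul_ne_zero (hb j) (pow_ne_zero _ ht0)
        have hfib : ∀ a ∈ (Finset.univ.erase (0 : F)).image (fun t => b j * t ^ m j),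
            ((Finset.univ.erase (0 : F)).filter (fun t => b j * t ^ m j = a)).card ≤ d j := by
          intro a hamem
          obtain ⟨t0, ht0mem, ht0⟩ := Finset.mem_image.mp hamem
          have ht00 : t0 ≠ 0 := Finset.ne_of_mem_erase ht0mem
          set μ : Finset F := (Polynomial.nthRoots (d j) (1 : F)).toFinset with hμ
          have hsubfib : ((Finset.univ.erase (0 : F)).filter
              (fun t => b j * t ^ m j = a)).image (fun t => t * t0⁻¹) ⊆ μ := by
            intro w hw
            obtain ⟨t, htmem, htw⟩ := Finset.mem_image.mp hw
            obtain ⟨htne, hta⟩ := Finset.mem_filter.mp htmem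
            have ht0' : t ≠ 0 := Finset.ne_of_mem_erase htne
            have htm : t ^ m j = t0 ^ m j := by
              have : b j * t ^ m j = b j * t0 ^ m j := by rw [hta, ht0]
              exact mul_left_cancel₀ (hb j) this
            set u : Fˣ := Units.mk0 (t * t0⁻¹) (mul_ne_zero ht0' (inv_ne_zero ht00)) with hu
            have hum : u ^ m j = 1 := by
              apply Units.ext
              rw [Units.val_pow_eq_pow_val, Units.val_one, hu, Units.val_mk0,
                mul_pow, inv_pow, htm, mul_inv_cancel₀ (pow_ne_zero _ ht00)]
            have h2 : orderOf u ∣ m j := orderOf_dvd_iff_pow_eq_one.mpr hum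
            have h3 : orderOf u ∣ q - 1 := hcardU ▸ orderOf_dvd_card
            have h4 : orderOf u ∣ d j := Nat.dvd_gcd h2 h3
            have hud : u ^ d j = 1 := orderOf_dvd_iff_pow_eq_one.mp h4
            have hwd : w ^ d j = 1 := by
              rw [← htw]
              have hval := congrArg Units.val hud
              rw [Units.val_pow_eq_pow_val, Units.val_one, hu, Units.val_mk0] at hval
              exact hval
            rw [hμ, Multiset.mem_toFinset]
            rw [Polynomial.mem_nthRoots (by have := hd2 j; omega : 0 < d j)]
            exact hwd
          have hinjmul : Set.InjOn (fun t : F => t * t0⁻¹)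
              ((Finset.univ.erase (0 : F)).filter (fun t => b j * t ^ m j = a)) := by
            intro s1 _ s2 _ h
            simpa using mul_right_cancel₀ (inv_ne_zero ht00) h
          calc ((Finset.univ.erase (0 : F)).filter (fun t => b j * t ^ m j = a)).card
              = (((Finset.univ.erase (0 : F)).filter
                  (fun t => b j * t ^ m j = a)).image (fun t => t * t0⁻¹)).card :=
                (Finset.card_image_of_injOn hinjmul).symm
            _ ≤ μ.card := Finset.card_le_card hsubfib
            _ ≤ Multiset.card (Polynomial.nthRoots (d j) (1 : F)) := Multiset.toFinset_card_le _
            _ ≤ d j := Polynomial.card_nthRoots _ _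
        have hmain : q - 1 ≤ d j * W.card := by
          have h1 : (Finset.univ.erase (0 : F)).card = q - 1 := by
            rw [Finset.card_erase_of_mem (Finset.mem_univ _), Finset.card_univ, hq]
          have h2 := Finset.card_le_mul_card_image (Finset.univ.erase (0 : F)) (d j) hfib
          have h3 := Finset.card_le_card himg
          calc q - 1 = (Finset.univ.erase (0 : F)).card := h1.symm
            _ ≤ d j * ((Finset.univ.erase (0 : F)).image (fun t => b j * t ^ m j)).card := h2
            _ ≤ d j * W.card := Nat.mul_le_mul_left _ h3
        have hWq : ((W.card : ℚ)) = ((V j).card : ℚ) - 1 := by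
          rw [hWc]
          have := hVpos j
          push_cast [Nat.cast_sub this]
          ring
        rw [← hWq]
        rw [div_le_iff₀ (by exact_mod_cast hd1 j : (0:ℚ) < d j)]
        have : ((q - 1 : ℕ) : ℚ) ≤ ((d j * W.card : ℕ) : ℚ) := by exact_mod_cast hmain
        push_cast [Nat.cast_sub (by omega : 1 ≤ q)] at this
        linarith [this]
      -- iterated sumsets
      have key : ∀ k : ℕ, k ≤ n → ∃ A : Finset F, (0 : F) ∈ A ∧
          (∀ s ∈ A, ∃ x : Fin n → F, (∀ l : Fin n, k ≤ (l : ℕ) → x l = 0) ∧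
            ∑ l, b l * x l ^ m l = s) ∧
          ((1 : ℚ) + ∑ l ∈ Finset.univ.filter (fun l : Fin n => (l : ℕ) < k),
            ((q : ℚ) - 1) / (d l) ≤ (A.card : ℚ)) := by
        intro k
        induction k with
        | zero =>
          intro _
          refine ⟨{0}, Finset.mem_singleton_self 0, ?_, ?_⟩
          · intro s hs
            rw [Finset.mem_singleton] at hs
            subst hs
            refine ⟨fun _ => 0, fun _ _ => rfl, ?_⟩
            apply Finset.sum_eq_zero
            intro l _
            show b l * (0 : F) ^ m l = 0
            rw [zero_pow (hm l).ne', mul_zero]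
          · have : Finset.univ.filter (fun l : Fin n => (l : ℕ) < 0) = ∅ := by
              apply Finset.filter_false_of_mem
              intro l _
              omega
            rw [this]
            simp
        | succ k ihk =>
          intro hkn
          obtain ⟨A, h0A, hrep, hcard⟩ := ihk (by omega)
          set jk : Fin n := ⟨k, by omega⟩ with hjk
          refine ⟨A + V jk, by simpa using Finset.add_mem_add h0A (h0V jk), ?_, ?_⟩
          · intro s' hs'
            obtain ⟨s, hs, v, hv, rfl⟩ := Finset.mem_add.mp hs'
            obtain ⟨x, hxz, hxs⟩ := hrep s hs
            obtain ⟨t, _, htv⟩ := Finset.mem_image.mp hv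
            refine ⟨Function.update x jk t, ?_, ?_⟩
            · intro l hl
              have hljk : l ≠ jk := by
                intro hcontr
                have hval : ((jk : Fin n) : ℕ) = k := rfl
                rw [hcontr, hval] at hl
                omega
              rw [Function.update_of_ne hljk]
              exact hxz l (by omega)
            · rw [hsplit jk]
              have h1 : Function.update x jk t jk = t := Function.update_self _ _ _
              have h2 : ∑ l ∈ Finset.univ.erase jk, b l * (Function.update x jk t) l ^ m l
                  = ∑ l ∈ Finset.univ.erase jk, b l * x l ^ m l := by
                apply Finset.sum_congr rfl
                intro l hl
                rw [Function.update_of_ne (Finset.ne_of_mem_erase hl)]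
              have h3 : b jk * x jk ^ m jk = 0 := by
                rw [hxz jk (by rw [hjk]), zero_pow (hm jk).ne', mul_zero]
              have h4 : ∑ l ∈ Finset.univ.erase jk, b l * x l ^ m l = s := by
                have hthis := hsplit jk x
                rw [hxs, h3] at hthis
                rw [hthis, zero_add]
              rw [h1, h2, h4, htv]
              ring
          · -- cardinality via Scherk
            have huniqS : ∀ s ∈ A, ∀ v ∈ V jk, s + v = 0 → s = 0 ∧ v = 0 := by
              intro s hs v hv hsv
              obtain ⟨x, hxz, hxs⟩ := hrep s hs
              obtain ⟨t, _, htv⟩ := Finset.mem_image.mp hv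
              have hsum0 : ∑ l, b l * (Function.update x jk t) l ^ m l = 0 := by
                rw [hsplit jk]
                have h1 : Function.update x jk t jk = t := Function.update_self _ _ _
                have h2 : ∑ l ∈ Finset.univ.erase jk, b l * (Function.update x jk t) l ^ m l
                    = ∑ l ∈ Finset.univ.erase jk, b l * x l ^ m l := by
                  apply Finset.sum_congr rfl
                  intro l hl
                  rw [Function.update_of_ne (Finset.ne_of_mem_erase hl)]
                have h3 : b jk * x jk ^ m jk = 0 := by
                  rw [hxz jk (by rw [hjk]), zero_pow (hm jk).ne', mul_zero]
                have h4 : ∑ l ∈ Finset.univ.erase jk, b l * x l ^ m l = s := by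
                  have hthis := hsplit jk x
                  rw [hxs, h3] at hthis
                  rw [hthis, zero_add]
                rw [h1, h2, h4, htv]
                linear_combination hsv
              have hall := huniq0 _ hsum0
              have ht0 : t = 0 := by
                have := hall jk
                rwa [Function.update_self] at this
              have hv0 : v = 0 := by
                rw [← htv, ht0, zero_pow (hm jk).ne', mul_zero]
              constructor
              · rw [hv0, add_zero] at hsv
                exact hsv
              · exact hv0
            have hscherk := scherk_aux (V jk).card (V jk) A le_rfl h0A (h0V jk) huniqS
            have hfil : Finset.univ.filter (fun l : Fin n => (l : ℕ) < k + 1)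
                = insert jk (Finset.univ.filter (fun l : Fin n => (l : ℕ) < k)) := by
              ext l
              simp only [Finset.mem_insert, Finset.mem_filter, Finset.mem_univ, true_and,
                hjk, Fin.ext_iff]
              omega
            have hnotmem : jk ∉ Finset.univ.filter (fun l : Fin n => (l : ℕ) < k) := by
              simp [hjk]
            rw [hfil, Finset.sum_insert hnotmem]
            have hVq := hVcard jk
            have hcast : ((A + V jk).card : ℚ) ≥ (A.card : ℚ) + ((V jk).card : ℚ) - 1 := by
              have : (A.card : ℚ) + ((V jk).card : ℚ) ≤ ((A + V jk).card : ℚ) + 1 := by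
                exact_mod_cast hscherk
              linarith
            linarith [hcard, hVq, hcast]
      -- final contradiction
      obtain ⟨A, _, _, hcard⟩ := key n le_rfl
      have hfil : Finset.univ.filter (fun l : Fin n => (l : ℕ) < n) = Finset.univ := by
        apply Finset.filter_true_of_mem
        intro l _
        exact l.isLt
      rw [hfil] at hcard
      have hsum_eq : ∑ l : Fin n, ((q : ℚ) - 1) / (d l)
          = ((q : ℚ) - 1) * ∑ l : Fin n, (1 : ℚ) / (d l) := by
        rw [Finset.mul_sum]
        apply Finset.sum_congr rfl
        intro l _
        rw [div_eq_mul_one_div]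
      have hAub : (A.card : ℚ) ≤ q := by
        have := Finset.card_le_univ A
        rw [hq] at this
        exact_mod_cast this
      have hq1 : (0 : ℚ) < (q : ℚ) - 1 := by
        have : (2 : ℚ) ≤ q := by exact_mod_cast hq2
        linarith
      have : (q : ℚ) < (A.card : ℚ) := by
        have h' : ((q : ℚ) - 1) * 1 < ((q : ℚ) - 1) * ∑ l : Fin n, (1 : ℚ) / (d l) := by
          apply mul_lt_mul_of_pos_left _ hq1
          exact hineq
        rw [hsum_eq] at hcard
        linarith
      linarith
end

section
/- Let F be a finite field with q elements, m₁,…,m_n positive integers, and b₁,…,b_n ∈ F nonzero. Set d_j = gcd(m_j, q-1). If 1/d₁ + … + 1/d_n > 1, then the equation b₁X₁^{m₁} + … + b_nX_n^{m_n} = 0 has a nontrivial solution in Fⁿ, i.e., a solution other than (0,…,0). -/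
/-!
Put `A j = {b j * x ^ m j | x : F}`. Its nonzero part is a coset of the subgroup of `m j`-th
powers of the cyclic group `Fˣ`, which has `(q - 1) / d j` elements, so the hypothesis says
`∑ j, #(A j) > q - 1 + n`. If `0 = ∑ j, a j` with `a j ∈ A j` only for `a = 0`, Scherk's
theorem (`0 ∈ A ∩ B` with `0 = a + b` only for `a = b = 0` forces `#(A + B) ≥ #A + #B - 1`),
applied `n - 1` times, gives `#(∑ j, A j) ≥ ∑ j, #(A j) - (n - 1) > q`, which is absurd.

Scherk's theorem goes by induction on `#B`. If some `e ∈ A \ {0}` and `b ∈ B` have `e + b ∉ A`,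
the Dyson `e`-transform of `(A, B)` keeps `#A + #B` and the unique representation of `0`, does
not enlarge `A + B`, and strictly shrinks `B`. Otherwise `A \ {0}` is stable under translation by
every element of `B`, which forces `A ∩ B = {0}`, and then `#(A + B) ≥ #(A ∪ B) = #A + #B - 1`.
-/

open Finset Pointwise

namespace Finset

theorem inter_subset_zero_of_forall_add_mem {G : Type*} [AddGroup G] [DecidableEq G]
    {A B : Finset G} (h : ∀ a ∈ A, ∀ b ∈ B, a + b = 0 → a = 0)
    (hsat : ∀ a ∈ A, a ≠ 0 → ∀ b ∈ B, a + b ∈ A) : A ∩ B ⊆ {0} := by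
  intro x hx
  obtain ⟨hxA, hxB⟩ := mem_inter.1 hx
  rw [mem_singleton]
  by_contra hx0
  have hmaps : (A.erase 0).image (· + x) ⊆ A.erase 0 := by
    simp only [image_subset_iff, mem_erase]
    exact fun a ⟨ha0, ha⟩ => ⟨fun hax => ha0 (h a ha x hxB hax), hsat a ha ha0 x hxB⟩
  have himage : (A.erase 0).image (· + x) = A.erase 0 :=
    eq_of_subset_of_card_le hmaps (card_image_of_injective _ (add_left_injective x)).ge
  have hx : x ∈ (A.erase 0).image (· + x) := by
    rw [himage]
    exact mem_erase.2 ⟨hx0, hxA⟩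
  obtain ⟨a, ha, hax⟩ := mem_image.1 hx
  exact (mem_erase.1 ha).1 (by simpa using hax)

theorem mem_fintype_sum {G : Type*} [AddCommMonoid G] [DecidableEq G] {ι : Type*} [Fintype ι]
    {A : ι → Finset G} {x : G} :
    x ∈ ∑ j, A j ↔ ∃ y : ι → G, (∀ j, y j ∈ A j) ∧ ∑ j, y j = x := by
  rw [← mem_coe, coe_sum, Set.mem_fintype_sum]
  simp

variable {G : Type*} [AddCommGroup G] [DecidableEq G]

theorem scherk {A B : Finset G} (hA : 0 ∈ A) (hB : 0 ∈ B)
    (h : ∀ a ∈ A, ∀ b ∈ B, a + b = 0 → a = 0) : #A + #B ≤ #(A + B) + 1 := by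
  induction B using Finset.strongInduction generalizing A with
  | _ B ih =>
  by_cases hsat : ∀ a ∈ A, a ≠ 0 → ∀ b ∈ B, a + b ∈ A
  · have hunion : A ∪ B ⊆ A + B := union_subset (subset_add_left A hB) (subset_add_right B hA)
    have hinter : #(A ∩ B) ≤ 1 :=
      (card_le_card (inter_subset_zero_of_forall_add_mem h hsat)).trans (card_singleton 0).le
    calc #A + #B = #(A ∪ B) + #(A ∩ B) := (card_union_add_card_inter A B).symm
      _ ≤ #(A + B) + 1 := add_le_add (card_le_card hunion) hinter
  · push Not at hsat
    obtain ⟨e, heA, he0, b, hbB, hebA⟩ := hsat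
    set T := addDysonETransform e (A, B) with hT
    have hmemT2 : ∀ c, c ∈ T.2 ↔ c ∈ B ∧ e + c ∈ A := by
      simp [hT, mem_neg_vadd_finset_iff]
    have hssub : T.2 ⊂ B :=
      ssubset_iff_of_subset inter_subset_left |>.2 ⟨b, hbB, fun hb => hebA ((hmemT2 b).1 hb).2⟩
    have hT1 : 0 ∈ T.1 := mem_union_left _ hA
    have hT2 : 0 ∈ T.2 := (hmemT2 0).2 ⟨hB, by simpa using heA⟩
    have hTuniq : ∀ a ∈ T.1, ∀ c ∈ T.2, a + c = 0 → a = 0 := by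
      intro a ha c hc hac
      obtain ⟨hcB, hecA⟩ := (hmemT2 c).1 hc
      rcases mem_union.1 ha with haA | haeB
      · exact h a haA c hcB hac
      · obtain ⟨d, hdB, rfl⟩ := mem_vadd_finset.1 haeB
        have hec : e + c = 0 := h _ hecA d hdB (by rw [← hac, vadd_eq_add]; abel)
        exact absurd (h e heA c hcB hec) he0
    calc #A + #B = #T.1 + #T.2 := (addDysonETransform.card e (A, B)).symm
      _ ≤ #(T.1 + T.2) + 1 := ih _ hssub hT1 hT2 hTuniq
      _ ≤ #(A + B) + 1 := by
        gcongr 1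
        exact card_le_card (addDysonETransform.subset e (A, B))

theorem scherk_sum {n : ℕ} (A : Fin n → Finset G) (hA : ∀ j, 0 ∈ A j)
    (h : ∀ y : Fin n → G, (∀ j, y j ∈ A j) → ∑ j, y j = 0 → y = 0) :
    ∑ j, #(A j) + 1 ≤ #(∑ j, A j) + n := by
  induction n with
  | zero => simp
  | succ n ih =>
    have htail := ih (fun j => A j.succ) (fun j => hA j.succ) fun y hy hsum => by
      have := h (Fin.cons 0 y) (Fin.cases (hA 0) hy) (by simpa [Fin.sum_univ_succ] using hsum)
      exact funext fun j => congrFun this j.succ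
    have hzero : (0 : G) ∈ ∑ j : Fin n, A j.succ :=
      mem_fintype_sum.2 ⟨0, fun j => hA j.succ, sum_const_zero⟩
    have hhead := scherk (hA 0) hzero fun a ha c hc hac => by
      obtain ⟨y, hy, rfl⟩ := mem_fintype_sum.1 hc
      have := h (Fin.cons a y) (Fin.cases ha hy) (by simpa [Fin.sum_univ_succ] using hac)
      exact congrFun this 0
    rw [Fin.sum_univ_succ, Fin.sum_univ_succ]
    omega

theorem exists_ne_zero_sum_eq_zero_of_card_lt [Fintype G] {n : ℕ} (A : Fin n → Finset G)
    (hA : ∀ j, 0 ∈ A j) (hcard : Fintype.card G + n < ∑ j, #(A j) + 1) :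
    ∃ y : Fin n → G, (∀ j, y j ∈ A j) ∧ y ≠ 0 ∧ ∑ j, y j = 0 := by
  by_contra! hno
  have := scherk_sum A hA fun y hy hsum => by_contra fun hy0 => hno y hy hy0 hsum
  have := card_le_univ (∑ j, A j)
  omega

end Finset

theorem IsCyclic.card_image_pow {G : Type*} [CommGroup G] [IsCyclic G] [Fintype G]
    [DecidableEq G] (m : ℕ) :
    #(univ.image fun g : G => g ^ m) = Fintype.card G / (Fintype.card G).gcd m := by
  rw [← Nat.card_eq_fintype_card, ← IsCyclic.card_powMonoidHom_range, ← SetLike.coe_sort_coe,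
    MonoidHom.coe_range, Nat.card_eq_card_toFinset, Set.toFinset_range]
  rfl

theorem FiniteField.card_image_units_mul_pow {F : Type*} [Field F] [Fintype F] [DecidableEq F]
    {b : F} (hb : b ≠ 0) (m : ℕ) :
    #(univ.image fun u : Fˣ => b * ↑(u ^ m)) =
      (Fintype.card F - 1) / m.gcd (Fintype.card F - 1) := by
  have hinj : Function.Injective fun u : Fˣ => b * u := fun u v huv =>
    Units.ext (mul_left_cancel₀ hb huv)
  rw [show (fun u : Fˣ => b * ↑(u ^ m)) = (fun u : Fˣ => b * u) ∘ (· ^ m) from rfl,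
    ← image_image, card_image_of_injective _ hinj,
    IsCyclic.card_image_pow, Fintype.card_units, Nat.gcd_comm]

theorem lt_sum_div_of_one_lt_sum_inv {ι : Type*} [Fintype ι] {N : ℕ} (hN : 0 < N) {d : ι → ℕ}
    (hd : ∀ j, d j ∣ N) (h : 1 < ∑ j, (1 : ℚ) / d j) : N < ∑ j, N / d j := by
  have hd0 (j : ι) : (d j : ℚ) ≠ 0 := by
    exact_mod_cast (Nat.pos_of_dvd_of_pos (hd j) hN).ne'
  have : (N : ℚ) < ∑ j, ((N / d j : ℕ) : ℚ) := calc
    (N : ℚ) = N * 1 := (mul_one _).symm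
    _ < N * ∑ j, (1 : ℚ) / d j := by gcongr
    _ = ∑ j, ((N / d j : ℕ) : ℚ) := by
      rw [mul_sum]
      exact sum_congr rfl fun j _ => by rw [Nat.cast_div (hd j) (hd0 j)]; ring
  exact_mod_cast this

/-- Homogeneous diagonal equations have nontrivial solutions under the Morlaye–Joly condition. -/
theorem stmt_8 (F : Type*) [Field F] [Fintype F] (q n : ℕ) (hq : Fintype.card F = q)
    (m : Fin n → ℕ) (hm : ∀ j, 0 < m j) (b : Fin n → F) (hb : ∀ j, b j ≠ 0)
    (hineq : (1 : ℚ) < ∑ j, (1 : ℚ) / Nat.gcd (m j) (q - 1)) :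
    ∃ x : Fin n → F, x ≠ 0 ∧ ∑ j, b j * x j ^ m j = 0 := by
  classical
  subst hq
  let A (j : Fin n) : Finset F := insert 0 (univ.image fun u : Fˣ => b j * ↑(u ^ m j))
  have hcardA (j : Fin n) :
      #(A j) = (Fintype.card F - 1) / (m j).gcd (Fintype.card F - 1) + 1 := by
    rw [card_insert_of_notMem (by simp [hb j]), FiniteField.card_image_units_mul_pow (hb j)]
  have hsum := lt_sum_div_of_one_lt_sum_inv (Nat.sub_pos_of_lt Fintype.one_lt_card)
    (fun j => Nat.gcd_dvd_right _ _) hineq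
  have hcard : Fintype.card F + n < ∑ j, #(A j) + 1 := by
    simp only [hcardA, sum_add_distrib, sum_const, card_univ, Fintype.card_fin, smul_eq_mul,
      mul_one]
    omega
  obtain ⟨y, hyA, hy0, hysum⟩ :=
    exists_ne_zero_sum_eq_zero_of_card_lt A (fun j => mem_insert_self _ _) hcard
  have hy (j : Fin n) : ∃ x : F, b j * x ^ m j = y j := by
    rcases mem_insert.1 (hyA j) with h | h
    · exact ⟨0, by simp [h, (hm j).ne']⟩
    · obtain ⟨u, -, hu⟩ := mem_image.1 h
      exact ⟨u, by simpa using hu⟩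
  choose x hx using hy
  refine ⟨x, fun hx0 => hy0 (funext fun j => ?_), by simp only [hx, hysum]⟩
  rw [← hx j, hx0]
  simp [(hm j).ne']
end

section
/- Let F be a finite field with q elements of odd characteristic, a ∈ F nonzero, and m a positive integer. Let D_m(X,a) = ∑_{j=0}^{⌊m/2⌋} (m/(m-j))·binom(m-j, j)·(-a)^j·X^{m-2j} be the Dickson polynomial, and suppose 2^r exactly divides q²-1. If m is odd, then |{D_m(c,a) : c ∈ F}| = (q-1)/(2·gcd(m,q-1)) + (q+1)/(2·gcd(m,q+1)). -/
/-!
Let `K` be an algebraic closure of `F`, `q = #F` and `b ∈ K` the image of `a`. Every `c ∈ F` is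
`u + b / u` for a root `u` of `X ^ 2 - c X + b`, and Frobenius-invariance of `c` forces
`u ^ (q - 1) = 1` or `u ^ (q + 1) = b`; conversely every such `u` gives an element of `F`.
As `D_m(u + b / u, b) = u ^ m + (b / u) ^ m`, the value set is the image of
`S_A ∪ S_B`, with `S_A = {u ^ m | u ^ (q - 1) = 1}` and `S_B = {u ^ m | u ^ (q + 1) = b}`, under
`y ↦ y + b ^ m / y`, a map whose fibres are the orbits of the involution `y ↦ b ^ m / y`.
Both sets are stable under the involution, of sizes `(q - 1) / gcd(m, q - 1)` and
`(q + 1) / gcd(m, q + 1)`, and since `m` and these gcds are odd a fixed point `y ^ 2 = b ^ m` in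
either set is the `m`-th power of a square root of `b` lying in `F`, hence lies in both sets.
So every value has exactly two preimages in the disjoint union of `S_A` and `S_B`.
-/

open Polynomial Finset

theorem Finset.card_add_card_filter_eq_two_mul_card_image {α β : Type*} [DecidableEq α]
    [DecidableEq β] (S : Finset α) (σ : α → α) (g : α → β)
    (hσ : ∀ y ∈ S, σ y ∈ S) (hg : ∀ y ∈ S, ∀ z ∈ S, g z = g y ↔ z = y ∨ z = σ y) :
    #S + #{y ∈ S | σ y = y} = 2 * #(S.image g) := by
  have hfiber : ∀ y ∈ S, {z ∈ S | g z = g y} = {y, σ y} := by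
    intro y hy
    ext z
    simp only [mem_filter, mem_insert, mem_singleton]
    refine ⟨fun ⟨hz, h⟩ => (hg y hy z hz).1 h, ?_⟩
    rintro (rfl | rfl)
    · exact ⟨hy, rfl⟩
    · exact ⟨hσ y hy, (hg y hy _ (hσ y hy)).2 (Or.inr rfl)⟩
  rw [card_eq_sum_card_image g S,
    card_eq_sum_card_fiberwise (fun y hy => mem_image_of_mem g (mem_filter.1 hy).1),
    ← sum_add_distrib, mul_comm, ← smul_eq_mul, ← sum_const]
  refine sum_congr rfl fun t ht => ?_
  obtain ⟨y, hy, rfl⟩ := mem_image.1 ht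
  have hfixed : {a ∈ S | σ a = a ∧ g a = g y} = {a ∈ {z ∈ S | g z = g y} | σ a = a} := by
    rw [filter_filter]; simp only [and_comm]
  rw [filter_filter, hfixed, hfiber y hy]
  by_cases hfix : σ y = y
  · rw [hfix, pair_eq_singleton, filter_singleton, if_pos hfix, card_singleton]
  · have hσfix : σ (σ y) ≠ σ y := by
      intro h
      have hgy : g y = g (σ y) := ((hg y hy _ (hσ y hy)).2 (Or.inr rfl)).symm
      rcases (hg _ (hσ y hy) y hy).1 hgy with h' | h'
      · exact hfix h'.symm
      · exact hfix (h'.trans h).symm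
    rw [filter_insert, filter_singleton, if_neg hfix, if_neg hσfix,
      card_pair (Ne.symm hfix)]
    rfl

theorem add_div_eq_add_div_iff {K : Type*} [Field K] {c y z : K} (hy : y ≠ 0) (hz : z ≠ 0) :
    z + c / z = y + c / y ↔ z = y ∨ z = c / y := by
  rw [eq_div_iff hy, ← sub_eq_zero (a := z), ← sub_eq_zero (a := z * y), ← mul_eq_zero]
  constructor <;> intro h
  · field_simp at h
    linear_combination h
  · field_simp
    linear_combination h

theorem Polynomial.dickson_one_eval_add {R : Type*} [CommRing R] (x y : R) :
    ∀ n, (dickson 1 (x * y) n).eval (x + y) = x ^ n + y ^ n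
  | 0 => by simp only [pow_zero, dickson_zero]; norm_num
  | 1 => by simp only [eval_X, dickson_one, pow_one]
  | n + 2 => by
    simp only [dickson_add_two, eval_sub, eval_mul, eval_X, eval_C,
      dickson_one_eval_add x y n, dickson_one_eval_add x y (n + 1)]
    ring

theorem div_mem_nthRootsFinset {K : Type*} [Field K] {n : ℕ} {e u : K} (b : K)
    (hu : u ∈ nthRootsFinset n e) : b / u ∈ nthRootsFinset n (b ^ n / e) := by
  rcases n.eq_zero_or_pos with rfl | hn
  · simp at hu
  rw [mem_nthRootsFinset hn] at hu ⊢
  rw [div_pow, hu]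

section PowerMap

variable {K : Type*} [Field K]

theorem card_nthRootsFinset_of_isAlgClosed [IsAlgClosed K] {n : ℕ} {e : K} (hn : (n : K) ≠ 0)
    (he : e ≠ 0) : #(nthRootsFinset n e) = n := by
  classical
  rw [nthRootsFinset_def, nthRoots,
    Multiset.toFinset_card_of_nodup (nodup_roots (separable_X_pow_sub_C e hn he)),
    splits_iff_card_roots.1 (IsAlgClosed.splits _), natDegree_X_pow_sub_C]

theorem filter_nthRootsFinset_pow_eq_pow [DecidableEq K] {n : ℕ} (m : ℕ) {e u : K} (hn : 0 < n)
    (he : e ≠ 0) (hu : u ^ n = e) :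
    {v ∈ nthRootsFinset n e | v ^ m = u ^ m} =
      (nthRootsFinset (m.gcd n) (1 : K)).image (· * u) := by
  have hu0 : u ≠ 0 := by rintro rfl; exact he (hu ▸ zero_pow hn.ne')
  have hd : 0 < m.gcd n := Nat.gcd_pos_of_pos_right m hn
  ext v
  simp only [mem_filter, mem_image, mem_nthRootsFinset hn, mem_nthRootsFinset hd, pow_gcd_eq_one]
  constructor
  · rintro ⟨hv, hvm⟩
    refine ⟨v / u, ⟨?_, ?_⟩, div_mul_cancel₀ v hu0⟩
    · rw [div_pow, hvm, div_self (pow_ne_zero m hu0)]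
    · rw [div_pow, hv, hu, div_self he]
  · rintro ⟨ζ, ⟨hζm, hζn⟩, rfl⟩
    exact ⟨by rw [mul_pow, hζn, one_mul, hu], by rw [mul_pow, hζm, one_mul]⟩

theorem card_image_pow_nthRootsFinset_mul_gcd [IsAlgClosed K] [DecidableEq K] {n : ℕ} (m : ℕ)
    {e : K} (hn : (n : K) ≠ 0) (he : e ≠ 0) :
    #((nthRootsFinset n e).image (· ^ m)) * m.gcd n = n := by
  have hn0 : 0 < n := Nat.pos_of_ne_zero (by rintro rfl; exact hn Nat.cast_zero)
  have hd : ((m.gcd n : ℕ) : K) ≠ 0 := fun h =>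
    hn (zero_dvd_iff.1 (h ▸ Nat.cast_dvd_cast (Nat.gcd_dvd_right m n)))
  conv_rhs => rw [← card_nthRootsFinset_of_isAlgClosed hn he,
    card_eq_sum_card_image (· ^ m) (nthRootsFinset n e)]
  rw [← smul_eq_mul, ← sum_const]
  refine sum_congr rfl fun y hy => ?_
  obtain ⟨u, hu, rfl⟩ := mem_image.1 hy
  rw [filter_nthRootsFinset_pow_eq_pow m hn0 he ((mem_nthRootsFinset hn0 e).1 hu),
    card_image_of_injective _ (mul_left_injective₀ (ne_zero_of_mem_nthRootsFinset he hu)),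
    card_nthRootsFinset_of_isAlgClosed hd one_ne_zero]

end PowerMap

theorem exists_sq_eq_and_pow_eq_of_sq_pow_eq {K : Type*} [Field K] {b e u : K} {m n : ℕ}
    (hm : Odd m) (hn : Even n) (hb : b ≠ 0) (hu : u ^ n = e) (he : e ^ 2 = b ^ n)
    (hum : (u ^ m) ^ 2 = b ^ m) : ∃ s : K, s ^ 2 = b ∧ s ^ n = e ∧ s ^ m = u ^ m := by
  have hu0 : u ≠ 0 := by
    rintro rfl
    rw [zero_pow hm.pos.ne', zero_pow two_ne_zero] at hum
    exact pow_ne_zero m hb hum.symm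
  set ζ := u ^ 2 / b
  have hζm : ζ ^ m = 1 := by
    rw [div_pow, ← pow_mul, mul_comm, pow_mul, hum, div_self (pow_ne_zero _ hb)]
  have hζn : ζ ^ n = 1 := by
    rw [div_pow, ← pow_mul, mul_comm, pow_mul, hu, he, div_self (pow_ne_zero _ hb)]
  have hd : Odd (m.gcd n) := hm.of_dvd_nat (Nat.gcd_dvd_left m n)
  -- `ζ ^ d = 1` for the odd number `d = gcd m n`, so `ζ` is the square of `ζ ^ ((d + 1) / 2)`
  set η := ζ ^ ((m.gcd n + 1) / 2)
  have hη2 : η ^ 2 = ζ := by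
    rw [← pow_mul, Nat.div_mul_cancel hd.add_one.two_dvd, pow_succ,
      pow_gcd_eq_one.2 ⟨hζm, hζn⟩, one_mul]
  have hηn : η ^ n = 1 := by rw [← pow_mul, mul_comm, pow_mul, hζn, one_pow]
  have hη0 : η ≠ 0 :=
    (pow_ne_zero_iff two_ne_zero).1 (hη2 ▸ div_ne_zero (pow_ne_zero 2 hu0) hb)
  set w := u / η
  have hw2 : w ^ 2 = b := by
    rw [div_pow, hη2, div_div_cancel₀ (pow_ne_zero 2 hu0)]
  have hwn : w ^ n = e := by rw [div_pow, hu, hηn, div_one]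
  have huw : u = η * w := (mul_div_cancel₀ u hη0).symm
  rcases sq_eq_one_iff.1 (show (η ^ m) ^ 2 = 1 by rw [← pow_mul, mul_comm, pow_mul, hη2, hζm])
    with h | h
  · exact ⟨w, hw2, hwn, by rw [huw, mul_pow, h, one_mul]⟩
  · exact ⟨-w, by rw [neg_sq, hw2], by rw [hn.neg_pow, hwn],
      by rw [huw, mul_pow, h, hm.neg_pow, neg_one_mul]⟩

namespace FiniteField

variable {F K : Type*} [Field F] [Fintype F] [Field K] [Algebra F K]

theorem mem_range_algebraMap_of_pow_card_eq {x : K} (hx : x ^ Fintype.card F = x) :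
    x ∈ Set.range (algebraMap F K) := by
  classical
  have hmonic : (X ^ Fintype.card F - X : F[X]).Monic :=
    monic_X_pow_sub (by rw [degree_X]; exact_mod_cast Fintype.one_lt_card)
  have hroots := hmonic.roots_map_of_card_eq_natDegree (algebraMap F K) (by
    rw [roots_X_pow_card_sub_X, ← card_def, card_univ,
      X_pow_card_sub_X_natDegree_eq F Fintype.one_lt_card])
  have hxroot : x ∈ ((X ^ Fintype.card F - X : F[X]).map (algebraMap F K)).roots := by
    rw [mem_roots (hmonic.map _).ne_zero]
    simp [hx]
  rw [← hroots, roots_X_pow_card_sub_X, Multiset.mem_map] at hxroot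
  obtain ⟨c, -, hc⟩ := hxroot
  exact ⟨c, hc⟩

theorem add_div_pow_card_eq_self_iff {u b : K} (hu : u ≠ 0) (hb : b ^ Fintype.card F = b) :
    (u + b / u) ^ Fintype.card F = u + b / u ↔
      u ^ (Fintype.card F - 1) = 1 ∨ u ^ (Fintype.card F + 1) = b := by
  have hfrob := map_add (frobeniusAlgHom F K) u (b / u)
  rw [map_div₀, coe_frobeniusAlgHom] at hfrob
  dsimp only at hfrob
  rw [hb] at hfrob
  rw [hfrob, add_div_eq_add_div_iff hu (pow_ne_zero _ hu), eq_div_iff hu, ← pow_succ,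
    ← pow_sub_one_mul Fintype.card_ne_zero, mul_eq_right₀ hu]

end FiniteField

section PowerImages

variable {K : Type*} [Field K] [DecidableEq K] {q m : ℕ} {b : K}

theorem sq_eq_pow_iff_mem_inter (hq : Odd q) (hq1 : 1 < q) (hm : Odd m) (hb : b ≠ 0)
    (hbq : b ^ q = b) {y : K}
    (hy : y ∈ (nthRootsFinset (q - 1) (1 : K)).image (· ^ m) ∪
      (nthRootsFinset (q + 1) b).image (· ^ m)) :
    y ^ 2 = b ^ m ↔ y ∈ (nthRootsFinset (q - 1) (1 : K)).image (· ^ m) ∩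
      (nthRootsFinset (q + 1) b).image (· ^ m) := by
  have hpow : ∀ s : K, s ^ (q + 1) = s ^ (q - 1) * s ^ 2 := fun s => by
    rw [← pow_add]; congr 1; omega
  have hbq1 : b ^ (q - 1) = 1 := by rwa [← mul_eq_right₀ hb, pow_sub_one_mul (by omega)]
  have hmemA : ∀ s : K, s ∈ nthRootsFinset (q - 1) 1 ↔ s ^ (q - 1) = 1 :=
    fun s => mem_nthRootsFinset (Nat.sub_pos_of_lt hq1) 1
  have hmemB : ∀ s : K, s ∈ nthRootsFinset (q + 1) b ↔ s ^ (q + 1) = b :=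
    fun s => mem_nthRootsFinset q.succ_pos b
  have hboth : ∀ s : K, s ^ 2 = b → s ^ (q - 1) = 1 → s ^ m ∈
      (nthRootsFinset (q - 1) (1 : K)).image (· ^ m) ∩
        (nthRootsFinset (q + 1) b).image (· ^ m) :=
    fun s hs2 hs => mem_inter.2 ⟨mem_image_of_mem _ ((hmemA s).2 hs),
      mem_image_of_mem _ ((hmemB s).2 (by rw [hpow, hs, hs2, one_mul]))⟩
  constructor
  · intro hy2
    rcases mem_union.1 hy with hy | hy <;> obtain ⟨u, hu, rfl⟩ := mem_image.1 hy
    · obtain ⟨s, hs2, hs, hsu⟩ := exists_sq_eq_and_pow_eq_of_sq_pow_eq hm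
        (Nat.Odd.sub_odd hq odd_one) hb ((hmemA u).1 hu) (by rw [one_pow, hbq1]) hy2
      exact hsu ▸ hboth s hs2 hs
    · obtain ⟨s, hs2, hs, hsu⟩ := exists_sq_eq_and_pow_eq_of_sq_pow_eq hm
        hq.add_one hb ((hmemB u).1 hu) (by rw [hpow b, hbq1, one_mul]) hy2
      refine hsu ▸ hboth s hs2 ?_
      rwa [hpow, hs2, mul_eq_right₀ hb] at hs
  · intro hy
    obtain ⟨⟨u, hu, rfl⟩, ⟨v, hv, hvu⟩⟩ :=
      And.imp mem_image.1 mem_image.1 (mem_inter.1 hy)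
    calc (u ^ m) ^ 2 = (u ^ (q - 1)) ^ m * (u ^ m) ^ 2 := by rw [(hmemA u).1 hu, one_pow, one_mul]
      _ = (v ^ m) ^ (q + 1) := by rw [hvu, hpow, pow_right_comm]
      _ = b ^ m := by rw [← pow_mul, mul_comm, pow_mul, (hmemB v).1 hv]

theorem two_mul_card_image_add_div_eq (hq : Odd q) (hq1 : 1 < q) (hm : Odd m) (hb : b ≠ 0)
    (hbq : b ^ q = b) :
    2 * #(((nthRootsFinset (q - 1) (1 : K)).image (· ^ m) ∪
        (nthRootsFinset (q + 1) b).image (· ^ m)).image fun y => y + b ^ m / y) =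
      #((nthRootsFinset (q - 1) (1 : K)).image (· ^ m)) +
        #((nthRootsFinset (q + 1) b).image (· ^ m)) := by
  set SA := (nthRootsFinset (q - 1) (1 : K)).image (· ^ m)
  set SB := (nthRootsFinset (q + 1) b).image (· ^ m)
  have hbq1 : b ^ (q - 1) = 1 := by rwa [← mul_eq_right₀ hb, pow_sub_one_mul (by omega)]
  have hne : ∀ y ∈ SA ∪ SB, y ≠ 0 := by
    intro y hy
    rcases mem_union.1 hy with hy | hy <;> obtain ⟨u, hu, rfl⟩ := mem_image.1 hy
    · exact pow_ne_zero m (ne_zero_of_mem_nthRootsFinset one_ne_zero hu)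
    · exact pow_ne_zero m (ne_zero_of_mem_nthRootsFinset hb hu)
  have hσ : ∀ y ∈ SA ∪ SB, b ^ m / y ∈ SA ∪ SB := by
    intro y hy
    rcases mem_union.1 hy with hy | hy <;> obtain ⟨u, hu, rfl⟩ := mem_image.1 hy
    · refine mem_union_left _ (mem_image.2 ⟨b / u, ?_, div_pow b u m⟩)
      simpa only [hbq1, div_one] using div_mem_nthRootsFinset b hu
    · refine mem_union_right _ (mem_image.2 ⟨b / u, ?_, div_pow b u m⟩)
      simpa only [pow_succ, mul_div_cancel_right₀ _ hb, hbq] using div_mem_nthRootsFinset b hu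
  have hfix : {y ∈ SA ∪ SB | b ^ m / y = y} = SA ∩ SB := by
    ext y
    rw [mem_filter]
    constructor
    · rintro ⟨hy, h⟩
      exact (sq_eq_pow_iff_mem_inter hq hq1 hm hb hbq hy).1
        (by rw [sq, (div_eq_iff (hne y hy)).1 h])
    · intro hy
      have hy' := mem_union_left SB (mem_inter.1 hy).1
      refine ⟨hy', (div_eq_iff (hne y hy')).2 ?_⟩
      rw [← sq, (sq_eq_pow_iff_mem_inter hq hq1 hm hb hbq hy').2 hy]
  rw [← card_add_card_filter_eq_two_mul_card_image _ (b ^ m / ·) _ hσ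
    fun y hy z hz => add_div_eq_add_div_iff (hne y hy) (hne z hz), hfix, card_union_add_card_inter]

end PowerImages

section ValueSet

open FiniteField

variable {F K : Type*} [Field F] [Fintype F] [DecidableEq F] [Field K] [IsAlgClosed K]
  [Algebra F K] [DecidableEq K]

theorem image_algebraMap_image_dickson_eval {a : F} (ha : a ≠ 0) (m : ℕ) :
    (univ.image fun c : F => (dickson 1 a m).eval c).image (algebraMap F K) =
      (nthRootsFinset (Fintype.card F - 1) (1 : K) ∪
          nthRootsFinset (Fintype.card F + 1) (algebraMap F K a)).image
        fun u => u ^ m + (algebraMap F K a / u) ^ m := by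
  set b := algebraMap F K a
  have hb : b ≠ 0 := (_root_.map_ne_zero _).2 ha
  have hbq : b ^ Fintype.card F = b := by rw [← map_pow, pow_card]
  have hq : 0 < Fintype.card F - 1 := Nat.sub_pos_of_lt Fintype.one_lt_card
  have hmem : ∀ u, u ∈ nthRootsFinset (Fintype.card F - 1) (1 : K) ∪
      nthRootsFinset (Fintype.card F + 1) b ↔
        u ≠ 0 ∧ (u + b / u) ^ Fintype.card F = u + b / u := by
    intro u
    have hu : u ∈ nthRootsFinset (Fintype.card F - 1) (1 : K) ∪
        nthRootsFinset (Fintype.card F + 1) b → u ≠ 0 := by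
      rw [mem_union]
      rintro (h | h)
      exacts [ne_zero_of_mem_nthRootsFinset one_ne_zero h, ne_zero_of_mem_nthRootsFinset hb h]
    rw [mem_union, mem_nthRootsFinset hq, mem_nthRootsFinset (Nat.succ_pos _)] at hu ⊢
    exact ⟨fun h => ⟨hu h, (add_div_pow_card_eq_self_iff (hu h) hbq).2 h⟩,
      fun ⟨hu, h⟩ => (add_div_pow_card_eq_self_iff hu hbq).1 h⟩
  have hdickson : ∀ u : K, u ≠ 0 → (dickson 1 b m).eval (u + b / u) = u ^ m + (b / u) ^ m :=
    fun u hu => by rw [← dickson_one_eval_add, mul_div_cancel₀ _ hu]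
  have hmap : ∀ c : F, algebraMap F K ((dickson 1 a m).eval c) =
      (dickson 1 b m).eval (algebraMap F K c) := fun c => by
    rw [← map_dickson, eval_map, eval₂_at_apply]
  ext t
  simp only [image_image, mem_image, mem_univ, true_and, Function.comp_def, hmem, hmap]
  constructor
  · rintro ⟨c, rfl⟩
    obtain ⟨u, hu⟩ := IsAlgClosed.exists_root (C 1 * X ^ 2 + C (-algebraMap F K c) * X + C b)
      (by rw [degree_quadratic one_ne_zero]; exact two_ne_zero)
    simp only [IsRoot, eval_add, eval_mul, eval_C, eval_pow, eval_X] at hu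
    have hu0 : u ≠ 0 := by rintro rfl; exact hb (by simpa using hu)
    have hc : algebraMap F K c = u + b / u := by
      field_simp
      linear_combination -hu
    refine ⟨u, ⟨hu0, ?_⟩, by rw [hc, hdickson u hu0]⟩
    rw [← hc, ← map_pow, pow_card]
  · rintro ⟨u, ⟨hu, hfix⟩, rfl⟩
    obtain ⟨c, hc⟩ := mem_range_algebraMap_of_pow_card_eq hfix
    exact ⟨c, by rw [hc, hdickson u hu]⟩

end ValueSet

theorem stmt_9_general (F : Type*) [Field F] [Fintype F] [DecidableEq F] (q m : ℕ)
    (hq : Fintype.card F = q) (hchar : ringChar F ≠ 2) (a : F) (ha : a ≠ 0)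
    (hmodd : Odd m) :
    ((Finset.univ.image fun c : F => (Polynomial.dickson 1 a m).eval c).card : ℚ)
      = (q - 1) / (2 * Nat.gcd m (q - 1)) + (q + 1) / (2 * Nat.gcd m (q + 1)) := by
  classical
  subst hq
  set K := AlgebraicClosure F
  set b := algebraMap F K a
  have hb : b ≠ 0 := (_root_.map_ne_zero _).2 ha
  have hq1 : 1 < Fintype.card F := Fintype.one_lt_card
  have hqK : (Fintype.card F : K) = 0 := by
    rw [← map_natCast (algebraMap F K), FiniteField.cast_card_eq_zero, map_zero]
  have hA := card_image_pow_nthRootsFinset_mul_gcd m (n := Fintype.card F - 1) (e := (1 : K))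
    (by rw [Nat.cast_sub hq1.le, hqK]; simp) one_ne_zero
  have hB := card_image_pow_nthRootsFinset_mul_gcd m (n := Fintype.card F + 1) (e := b)
    (by rw [Nat.cast_succ, hqK]; simp) hb
  have hT := two_mul_card_image_add_div_eq
    (Nat.odd_iff.2 (FiniteField.odd_card_of_char_ne_two hchar)) hq1 hmodd hb
    (by rw [← map_pow, FiniteField.pow_card])
  have hV : (univ.image fun c : F => (dickson 1 a m).eval c).image (algebraMap F K) =
      ((nthRootsFinset (Fintype.card F - 1) (1 : K)).image (· ^ m) ∪
        (nthRootsFinset (Fintype.card F + 1) b).image (· ^ m)).image fun y => y + b ^ m / y := by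
    rw [image_algebraMap_image_dickson_eval ha m, ← image_union, image_image]
    simp only [Function.comp_def, div_pow, b]
  rw [← hV, card_image_of_injective _ (algebraMap F K).injective] at hT
  have hd1 : 0 < m.gcd (Fintype.card F - 1) := Nat.gcd_pos_of_pos_right _ (by omega)
  have hd2 : 0 < m.gcd (Fintype.card F + 1) := Nat.gcd_pos_of_pos_right _ (by omega)
  qify [hq1.le] at hA hB hT hd1 hd2
  rw [← hA, ← hB]
  field_simp
  linear_combination hT

/-- Value set of a Dickson polynomial with nonzero parameter, odd degree case. -/
theorem stmt_9 (F : Type*) [Field F] [Fintype F] [DecidableEq F] (q r m : ℕ)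
    (hq : Fintype.card F = q) (hchar : ringChar F ≠ 2) (a : F) (ha : a ≠ 0)
    (hm : 0 < m) (hmodd : Odd m)
    (hr : 2 ^ r ∣ q ^ 2 - 1 ∧ ¬ 2 ^ (r + 1) ∣ q ^ 2 - 1) :
    ((Finset.univ.image fun c : F => (Polynomial.dickson 1 a m).eval c).card : ℚ)
      = (q - 1) / (2 * Nat.gcd m (q - 1)) + (q + 1) / (2 * Nat.gcd m (q + 1)) :=
  stmt_9_general F q m hq hchar a ha hmodd
end

section
/- Let F be a finite field with q elements, f₁,…,f_n ∈ F[X], H₁,…,H_k ∈ F[X₁,…,X_n] nonzero polynomials, and C₁,…,C_n nonempty subsets of F. Assume (q-1)·∑_{i=1}^k deg(H_i) < ∑_{j=1}^n (|V_{f_j}(C_j)| - 1), where V_{f_j}(C_j) = {f_j(c) : c ∈ C_j}. If the system H_i(f₁(X₁),…,f_n(X_n)) = 0, i = 1,…,k, has a solution with X_j ∈ C_j for all j, then it has a second, distinct such solution. -/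
open Finset Polynomial

section Aux

variable {F : Type*} [Field F] [DecidableEq F]

/-- Top coefficient of a Lagrange basis polynomial is the nodal weight. -/
lemma coeff_basis_top (V : Finset F) {a : F} (ha : a ∈ V) :
    (Lagrange.basis V id a).coeff (V.card - 1) = Lagrange.nodalWeight V id a := by
  rw [Lagrange.basis_eq_prod_sub_inv_mul_nodal_div ha, ← Lagrange.nodal_erase_eq_nodal_div ha,
    Polynomial.coeff_C_mul]
  have h1 : (Lagrange.nodal (V.erase a) id).natDegree = V.card - 1 := by
    rw [Lagrange.natDegree_nodal, card_erase_of_mem ha]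
  have h2 : (Lagrange.nodal (V.erase a) id).coeff (V.card - 1) = 1 := by
    rw [← h1]; exact Lagrange.nodal_monic.coeff_natDegree
  rw [h2, mul_one]

/-- Key 1-D identity: low powers have vanishing weighted sums over a node set. -/
lemma sum_pow_mul_nodalWeight_s15 (V : Finset F) (m : ℕ) (hm : m + 1 < V.card) :
    ∑ v ∈ V, v ^ m * Lagrange.nodalWeight V id v = 0 := by
  have hinj : Set.InjOn (id : F → F) V := fun x _ y _ h => h
  have hdeg : (X ^ m : F[X]).degree < V.card := by
    rw [degree_X_pow]
    exact_mod_cast Nat.lt_of_succ_lt hm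
  have h := Lagrange.eq_interpolate hinj hdeg
  have h2 := congrArg (fun p : F[X] => p.coeff (V.card - 1)) h
  simp only [Lagrange.interpolate_apply, Polynomial.finset_sum_coeff,
    Polynomial.coeff_C_mul, Polynomial.coeff_X_pow, id_eq, Polynomial.eval_pow,
    Polynomial.eval_X] at h2
  rw [if_neg (by omega)] at h2
  calc ∑ v ∈ V, v ^ m * Lagrange.nodalWeight V id v
      = ∑ v ∈ V, v ^ m * (Lagrange.basis V id v).coeff (V.card - 1) :=
        Finset.sum_congr rfl fun v hv => by rw [coeff_basis_top V hv]
    _ = 0 := h2.symm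

/-- Grid version: a polynomial of small total degree has vanishing weighted sum on a grid. -/
lemma grid_sum_eq_zero {n : ℕ} (V : Fin n → Finset F)
    (P : MvPolynomial (Fin n) F)
    (hP : P.totalDegree < ∑ j, ((V j).card - 1)) :
    ∑ y ∈ Fintype.piFinset V,
      MvPolynomial.eval y P * ∏ j, Lagrange.nodalWeight (V j) id (y j) = 0 := by
  have key : ∀ α ∈ P.support,
      ∑ y ∈ Fintype.piFinset V, (∏ j, y j ^ α j) *
        ∏ j, Lagrange.nodalWeight (V j) id (y j) = 0 := by
    intro α hα
    have hαd : ∑ j, α j < ∑ j, ((V j).card - 1) :=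
      lt_of_le_of_lt (by
        have := MvPolynomial.le_totalDegree hα
        calc ∑ j, α j = α.sum fun _ e => e := by
              rw [Finsupp.sum_fintype]; intro; rfl
          _ ≤ P.totalDegree := this) hP
    obtain ⟨j₀, hj₀⟩ : ∃ j₀, α j₀ + 1 < (V j₀).card := by
      by_contra hcon
      push_neg at hcon
      have : ∑ j, ((V j).card - 1) ≤ ∑ j, α j :=
        Finset.sum_le_sum fun j _ => by have := hcon j; omega
      omega
    have hfac : ∑ y ∈ Fintype.piFinset V,
        ∏ j, y j ^ α j * Lagrange.nodalWeight (V j) id (y j)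
        = ∏ j, ∑ v ∈ V j, v ^ α j * Lagrange.nodalWeight (V j) id v :=
      (Finset.prod_univ_sum V fun j v => v ^ α j * Lagrange.nodalWeight (V j) id v).symm
    calc ∑ y ∈ Fintype.piFinset V, (∏ j, y j ^ α j) *
          ∏ j, Lagrange.nodalWeight (V j) id (y j)
        = ∑ y ∈ Fintype.piFinset V,
          ∏ j, y j ^ α j * Lagrange.nodalWeight (V j) id (y j) := by
          refine Finset.sum_congr rfl fun y _ => ?_
          rw [Finset.prod_mul_distrib]
      _ = ∏ j, ∑ v ∈ V j, v ^ α j * Lagrange.nodalWeight (V j) id v := hfac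
      _ = 0 := Finset.prod_eq_zero (Finset.mem_univ j₀)
          (sum_pow_mul_nodalWeight_s15 (V j₀) (α j₀) hj₀)
  calc ∑ y ∈ Fintype.piFinset V,
        MvPolynomial.eval y P * ∏ j, Lagrange.nodalWeight (V j) id (y j)
      = ∑ y ∈ Fintype.piFinset V, ∑ α ∈ P.support,
          P.coeff α * ((∏ j, y j ^ α j) * ∏ j, Lagrange.nodalWeight (V j) id (y j)) := by
        refine Finset.sum_congr rfl fun y _ => ?_
        rw [MvPolynomial.eval_eq', Finset.sum_mul]
        exact Finset.sum_congr rfl fun α _ => by ring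
    _ = ∑ α ∈ P.support, P.coeff α * ∑ y ∈ Fintype.piFinset V,
          (∏ j, y j ^ α j) * ∏ j, Lagrange.nodalWeight (V j) id (y j) := by
        rw [Finset.sum_comm]
        exact Finset.sum_congr rfl fun α _ => by rw [Finset.mul_sum]
    _ = 0 := Finset.sum_eq_zero fun α hα => by rw [key α hα, mul_zero]

end Aux

/-- Corollary 3: restricted-variable version of Corollary 1. -/
theorem stmt_15 (F : Type*) [Field F] [Fintype F] [DecidableEq F] (q n k : ℕ)
    (hq : Fintype.card F = q) (f : Fin n → Polynomial F)
    (H : Fin k → MvPolynomial (Fin n) F) (hH : ∀ i, H i ≠ 0)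
    (C : Fin n → Finset F) (hC : ∀ j, (C j).Nonempty)
    (hdeg : (q - 1) * ∑ i, (H i).totalDegree
      < ∑ j, (((C j).image fun c => (f j).eval c).card - 1))
    (hsol : ∃ x : Fin n → F, (∀ j, x j ∈ C j) ∧
      ∀ i, MvPolynomial.eval (fun j => (f j).eval (x j)) (H i) = 0) :
    ∃ x y : Fin n → F, x ≠ y ∧
      ((∀ j, x j ∈ C j) ∧ ∀ i, MvPolynomial.eval (fun j => (f j).eval (x j)) (H i) = 0) ∧
      ((∀ j, y j ∈ C j) ∧ ∀ i, MvPolynomial.eval (fun j => (f j).eval (y j)) (H i) = 0) := by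
  subst hq
  by_contra hcon
  obtain ⟨x, hxC, hxH⟩ := hsol
  -- uniqueness of solutions
  have huniq : ∀ x' : Fin n → F, (∀ j, x' j ∈ C j) →
      (∀ i, MvPolynomial.eval (fun j => (f j).eval (x' j)) (H i) = 0) → x' = x := by
    intro x' hx'C hx'H
    by_contra hne
    exact hcon ⟨x', x, hne, ⟨hx'C, hx'H⟩, ⟨hxC, hxH⟩⟩
  set V : Fin n → Finset F := fun j => (C j).image fun c => (f j).eval c with hV
  set G : MvPolynomial (Fin n) F :=
    ∏ i, (1 - (H i) ^ (Fintype.card F - 1)) with hG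
  have hcard1 : 1 ≤ Fintype.card F := Fintype.card_pos
  -- degree bound
  have hGdeg : G.totalDegree < ∑ j, ((V j).card - 1) := by
    refine lt_of_le_of_lt ?_ hdeg
    calc G.totalDegree ≤ ∑ i, (1 - (H i) ^ (Fintype.card F - 1)).totalDegree :=
          MvPolynomial.totalDegree_finset_prod _ _
      _ ≤ ∑ i, (Fintype.card F - 1) * (H i).totalDegree := by
          refine Finset.sum_le_sum fun i _ => ?_
          refine le_trans (MvPolynomial.totalDegree_sub _ _) ?_
          rw [MvPolynomial.totalDegree_one, max_eq_right (Nat.zero_le _)]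
          exact MvPolynomial.totalDegree_pow _ _
      _ = (Fintype.card F - 1) * ∑ i, (H i).totalDegree := by rw [Finset.mul_sum]
  -- evaluation of G
  have hGeval : ∀ y : Fin n → F, MvPolynomial.eval y G
      = ∏ i, (1 - (MvPolynomial.eval y (H i)) ^ (Fintype.card F - 1)) := by
    intro y
    rw [hG, map_prod]
    exact Finset.prod_congr rfl fun i _ => by rw [map_sub, map_one, map_pow]
  have hGone : ∀ y : Fin n → F,
      (∀ i, MvPolynomial.eval y (H i) = 0) → MvPolynomial.eval y G = 1 := by
    intro y hy
    rw [hGeval]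
    refine Finset.prod_eq_one fun i _ => ?_
    rw [hy i, zero_pow (Nat.sub_ne_zero_of_lt Fintype.one_lt_card), sub_zero]
  have hGzero : ∀ y : Fin n → F,
      (∃ i, MvPolynomial.eval y (H i) ≠ 0) → MvPolynomial.eval y G = 0 := by
    intro y ⟨i, hi⟩
    rw [hGeval]
    refine Finset.prod_eq_zero (Finset.mem_univ i) ?_
    rw [FiniteField.pow_card_sub_one_eq_one _ hi, sub_self]
  -- the distinguished grid point
  set y₀ : Fin n → F := fun j => (f j).eval (x j) with hy₀
  have hy₀mem : y₀ ∈ Fintype.piFinset V := by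
    rw [Fintype.mem_piFinset]
    exact fun j => Finset.mem_image.mpr ⟨x j, hxC j, rfl⟩
  -- weighted sum over the grid
  have hsum := grid_sum_eq_zero V G hGdeg
  have hsingle : ∑ y ∈ Fintype.piFinset V,
      MvPolynomial.eval y G * ∏ j, Lagrange.nodalWeight (V j) id (y j)
      = ∏ j, Lagrange.nodalWeight (V j) id (y₀ j) := by
    rw [Finset.sum_eq_single y₀]
    · rw [hGone y₀ hxH, one_mul]
    · intro y hy hyne
      have hy' := Fintype.mem_piFinset.mp hy
      suffices h : MvPolynomial.eval y G = 0 by rw [h, zero_mul]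
      refine hGzero y ?_
      by_contra hall
      push_neg at hall
      choose x' hx'C hx'eq using fun j => Finset.mem_image.mp (hy' j)
      have hyx' : (fun j => (f j).eval (x' j)) = y := funext hx'eq
      have hx'sol : ∀ i, MvPolynomial.eval (fun j => (f j).eval (x' j)) (H i) = 0 := by
        intro i; rw [hyx']; exact hall i
      have := huniq x' hx'C hx'sol
      apply hyne
      funext j
      rw [← hx'eq j, this]
    · intro h; exact absurd hy₀mem h
  have hW : ∏ j, Lagrange.nodalWeight (V j) id (y₀ j) ≠ 0 := by
    refine Finset.prod_ne_zero_iff.mpr fun j _ => ?_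
    exact Lagrange.nodalWeight_ne_zero (fun a _ b _ h => h)
      (Fintype.mem_piFinset.mp hy₀mem j)
  rw [hsingle] at hsum
  exact hW hsum
end

section
/- Let F be a finite field with q = p^s elements and let K ⊆ F be a subfield with p^ℓ elements. Let m₁,…,m_n be positive integers, b₁,…,b_n ∈ F*, c ∈ F. Assume ∑_{j=1}^n 1/gcd(m_j, p^ℓ - 1) > (q-1)/(p^ℓ - 1). If the equation b₁X₁^{m₁} + … + b_nX_n^{m_n} = c has a solution with all X_j ∈ K, then it has a second, distinct solution with all X_j ∈ K. -/
open scoped Classical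

lemma aux_sum_pow_field {E : Type*} [Field E] [Fintype E] (e : ℕ)
    (h : ¬ ((Fintype.card E - 1) ∣ e ∧ 0 < e)) : ∑ t : E, t ^ e = 0 := by
  have h2 : 1 < Fintype.card E := Fintype.one_lt_card
  rcases Nat.eq_zero_or_pos e with rfl | hpos
  · exact FiniteField.sum_pow_lt_card_sub_one E 0 (by omega)
  · have hnd : ¬ (Fintype.card E - 1) ∣ e := fun hd => h ⟨hd, hpos⟩
    have hq1pos : 0 < Fintype.card E - 1 := by omega
    have he' : e % (Fintype.card E - 1) < Fintype.card E - 1 := Nat.mod_lt _ hq1pos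
    have hne : e % (Fintype.card E - 1) ≠ 0 := fun h0 => hnd (Nat.dvd_of_mod_eq_zero h0)
    have key : ∀ t : E, t ^ e = t ^ (e % (Fintype.card E - 1)) := by
      intro t
      by_cases ht : t = 0
      · subst ht; rw [zero_pow hpos.ne', zero_pow hne]
      · conv_lhs => rw [← Nat.div_add_mod e (Fintype.card E - 1)]
        rw [pow_add, pow_mul, FiniteField.pow_card_sub_one_eq_one t ht, one_pow, one_mul]
    rw [Finset.sum_congr rfl fun t _ => key t]
    exact FiniteField.sum_pow_lt_card_sub_one E _ he'

lemma aux_zero_sum (F : Type*) [Field F] (K : Subfield F) [Fintype ↥K]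
    (n : ℕ) (m : Fin n → ℕ) (hm : ∀ j, 0 < m j) (b : Fin n → F) (c : F) (N : ℕ)
    (hcount : N < ∑ j, (Fintype.card ↥K - 1) / Nat.gcd (m j) (Fintype.card ↥K - 1)) :
    ∑ x : Fin n → ↥K, ((∑ j, b j * (x j : F) ^ m j) - c) ^ N = 0 := by
  classical
  set q' := Fintype.card ↥K with hq'
  let g : Option (Fin n) → (Fin n → ↥K) → F :=
    fun o x => Option.elim o (-c) (fun j => b j * (x j : F) ^ m j)
  have hf : ∀ x : Fin n → ↥K, (∑ j, b j * (x j : F) ^ m j) - c = ∑ o : Option (Fin n), g o x := by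
    intro x
    rw [Fintype.sum_option]
    simp only [g, Option.elim]
    ring
  have hexp : ∀ x : Fin n → ↥K,
      ((∑ j, b j * (x j : F) ^ m j) - c) ^ N
        = ∑ π : Fin N → Option (Fin n), ∏ k, g (π k) x := by
    intro x
    rw [hf]
    calc (∑ o, g o x) ^ N = ∏ _k : Fin N, (∑ o, g o x) := by
          rw [Finset.prod_const, Finset.card_univ, Fintype.card_fin]
      _ = ∑ π ∈ Fintype.piFinset (fun _ : Fin N => Finset.univ), ∏ k, g (π k) x :=
          Finset.prod_univ_sum _ _
      _ = ∑ π : Fin N → Option (Fin n), ∏ k, g (π k) x := by rw [Fintype.piFinset_univ]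
  rw [Finset.sum_congr rfl fun x _ => hexp x, Finset.sum_comm]
  refine Finset.sum_eq_zero fun π _ => ?_
  set cnt : Option (Fin n) → ℕ := fun o => (Finset.univ.filter (fun k => π k = o)).card with hcnt
  have hprod : ∀ x : Fin n → ↥K, ∏ k, g (π k) x = ∏ o, (g o x) ^ cnt o := by
    intro x
    rw [← Finset.prod_fiberwise_of_maps_to (fun k _ => Finset.mem_univ (π k)) (fun k => g (π k) x)]
    refine Finset.prod_congr rfl fun o _ => ?_
    rw [Finset.prod_congr rfl (fun k hk => by rw [(Finset.mem_filter.mp hk).2]),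
      Finset.prod_const]
  have hsum_cnt : ∑ o, cnt o = N := by
    have h := Finset.card_eq_sum_card_fiberwise
      (s := (Finset.univ : Finset (Fin N))) (t := (Finset.univ : Finset (Option (Fin n))))
      (f := π) (fun k _ => Finset.mem_univ (π k))
    simpa [cnt] using h.symm
  have hx : ∑ x : Fin n → ↥K, ∏ k, g (π k) x
      = (-c) ^ cnt none * ∏ j, (b j ^ cnt (some j) * ∑ t : ↥K, (t : F) ^ (m j * cnt (some j))) := by
    calc ∑ x : Fin n → ↥K, ∏ k, g (π k) x
        = ∑ x : Fin n → ↥K, ((-c) ^ cnt none *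
            ∏ j, (b j ^ cnt (some j) * ((x j : F)) ^ (m j * cnt (some j)))) := by
          refine Finset.sum_congr rfl fun x _ => ?_
          rw [hprod, Fintype.prod_option]
          simp only [g, Option.elim]
          congr 1
          refine Finset.prod_congr rfl fun j _ => ?_
          rw [mul_pow, pow_mul]
      _ = (-c) ^ cnt none * ∑ x : Fin n → ↥K,
            ∏ j, (b j ^ cnt (some j) * ((x j : F)) ^ (m j * cnt (some j))) := by
          rw [Finset.mul_sum]
      _ = (-c) ^ cnt none * ∏ j, ∑ t : ↥K, (b j ^ cnt (some j) * (t : F) ^ (m j * cnt (some j))) := by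
          congr 1
          rw [Finset.prod_univ_sum, Fintype.piFinset_univ]
      _ = (-c) ^ cnt none * ∏ j, (b j ^ cnt (some j) * ∑ t : ↥K, (t : F) ^ (m j * cnt (some j))) := by
          congr 1
          exact Finset.prod_congr rfl fun j _ => (Finset.mul_sum _ _ _).symm
  rw [hx]
  by_cases hall : ∀ j : Fin n, (q' - 1) ∣ m j * cnt (some j) ∧ 0 < cnt (some j)
  · exfalso
    have hge : ∀ j, (q' - 1) / Nat.gcd (m j) (q' - 1) ≤ cnt (some j) := by
      intro j
      obtain ⟨hdvd, hpos⟩ := hall j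
      set d := Nat.gcd (m j) (q' - 1) with hd
      have hd0 : 0 < d := Nat.gcd_pos_of_pos_left _ (hm j)
      have hcop : Nat.Coprime (m j / d) ((q' - 1) / d) := Nat.coprime_div_gcd_div_gcd hd0
      have hdvd2 : (q' - 1) / d ∣ cnt (some j) * (m j / d) := by
        have h1 : d * ((q' - 1) / d) ∣ d * (cnt (some j) * (m j / d)) := by
          have e1 : d * ((q' - 1) / d) = q' - 1 := Nat.mul_div_cancel' (Nat.gcd_dvd_right _ _)
          have e2 : d * (cnt (some j) * (m j / d)) = m j * cnt (some j) := by
            rw [mul_comm (cnt (some j)) _, ← mul_assoc,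
              Nat.mul_div_cancel' (Nat.gcd_dvd_left _ _), mul_comm]
          rw [e1, e2]; exact hdvd
        exact (mul_dvd_mul_iff_left hd0.ne').mp h1
      exact Nat.le_of_dvd hpos (hcop.symm.dvd_of_dvd_mul_right hdvd2)
    have h1 : ∑ j, (q' - 1) / Nat.gcd (m j) (q' - 1) ≤ ∑ j, cnt (some j) :=
      Finset.sum_le_sum fun j _ => hge j
    have h2 : ∑ j, cnt (some j) ≤ N := by
      rw [← hsum_cnt, Fintype.sum_option]; omega
    omega
  · push_neg at hall
    obtain ⟨j0, hj0⟩ := hall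
    have hzero : ∑ t : ↥K, (t : F) ^ (m j0 * cnt (some j0)) = 0 := by
      have : ∑ t : ↥K, (t : F) ^ (m j0 * cnt (some j0))
          = ((∑ t : ↥K, t ^ (m j0 * cnt (some j0)) : ↥K) : F) := by
        push_cast; rfl
      rw [this]
      rw [aux_sum_pow_field _ ?_, Subfield.coe_zero]
      rintro ⟨hd, hp⟩
      have h3 := hj0 hd
      have h4 : cnt (some j0) ≠ 0 := by
        rintro h0; rw [h0, mul_zero] at hp; exact lt_irrefl 0 hp
      omega
    have hpz : (∏ j, (b j ^ cnt (some j) * ∑ t : ↥K, (t : F) ^ (m j * cnt (some j)))) = 0 :=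
      Finset.prod_eq_zero (Finset.mem_univ j0) (by rw [hzero, mul_zero])
    rw [hpz, mul_zero]
/-- Theorem 3: diagonal equations with variables restricted to a subfield. -/
theorem stmt_16 (F : Type*) [Field F] [Fintype F] (p s ℓ q n : ℕ) (hp : p.Prime)
    (hq : Fintype.card F = q) (hqs : q = p ^ s) (K : Subfield F)
    (hK : Fintype.card (K : Set F) = p ^ ℓ)
    (m : Fin n → ℕ) (hm : ∀ j, 0 < m j) (b : Fin n → F) (hb : ∀ j, b j ≠ 0) (c : F)
    (hineq : ((q : ℚ) - 1) / ((p : ℚ) ^ ℓ - 1)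
      < ∑ j, (1 : ℚ) / Nat.gcd (m j) (p ^ ℓ - 1))
    (hsol : ∃ x : Fin n → F, (∀ j, x j ∈ K) ∧ ∑ j, b j * x j ^ m j = c) :
    ∃ x y : Fin n → F, x ≠ y ∧
      ((∀ j, x j ∈ K) ∧ ∑ j, b j * x j ^ m j = c) ∧
      ((∀ j, y j ∈ K) ∧ ∑ j, b j * y j ^ m j = c) := by
  classical
  -- basic numerics
  have hq2 : 2 ≤ q := hq ▸ Fintype.one_lt_card
  have hs1 : 1 ≤ s := by
    rcases Nat.eq_zero_or_pos s with h | h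
    · subst h; simp at hqs; omega
    · exact h
  have hcardK : Fintype.card ↥K = p ^ ℓ := by
    rw [← hK]; exact Fintype.card_congr (Equiv.subtypeEquivRight fun x => Iff.rfl)
  have hK2 : 2 ≤ p ^ ℓ := hcardK ▸ Fintype.one_lt_card
  have hl1 : 1 ≤ ℓ := by
    rcases Nat.eq_zero_or_pos ℓ with h | h
    · subst h; simp at hK2
    · exact h
  -- characteristic
  haveI hrc := ringChar.charP F
  obtain ⟨t, hrp, hcard⟩ := FiniteField.card F (ringChar F)
  have hpr : p = ringChar F := by
    have hdvd : p ∣ ringChar F ^ (t : ℕ) := by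
      rw [← hcard, hq, hqs]; exact dvd_pow_self p (by omega)
    exact (Nat.prime_dvd_prime_iff_eq hp hrp).mp (hp.dvd_of_dvd_pow hdvd)
  haveI hcharF : CharP F p := hpr ▸ hrc
  have hpF : (p : F) = 0 := CharP.cast_eq_zero F p
  -- n is positive
  have hn : 0 < n := by
    rcases Nat.eq_zero_or_pos n with h | h
    · exfalso
      subst h
      rw [Finset.univ_eq_empty, Finset.sum_empty] at hineq
      have h1 : (0 : ℚ) < (q : ℚ) - 1 := by
        have : (2 : ℚ) ≤ (q : ℚ) := by exact_mod_cast hq2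
        linarith
      have h2 : (0 : ℚ) < (p : ℚ) ^ ℓ - 1 := by
        have : (2 : ℚ) ≤ (p : ℚ) ^ ℓ := by exact_mod_cast hK2
        linarith
      exact absurd hineq (not_lt.mpr (le_of_lt (div_pos h1 h2)))
    · exact h
  -- the counting inequality over ℕ
  have hcount : q - 1 < ∑ j, (p ^ ℓ - 1) / Nat.gcd (m j) (p ^ ℓ - 1) := by
    have hq'1 : 1 ≤ p ^ ℓ - 1 := by omega
    have hcast : ((p ^ ℓ - 1 : ℕ) : ℚ) = (p : ℚ) ^ ℓ - 1 := by
      push_cast [Nat.cast_sub (by omega : 1 ≤ p ^ ℓ)]; ring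
    have hpos : (0 : ℚ) < ((p ^ ℓ - 1 : ℕ) : ℚ) := by exact_mod_cast hq'1
    have hterm : ∀ j : Fin n, (1 : ℚ) / Nat.gcd (m j) (p ^ ℓ - 1)
        = ((p ^ ℓ - 1) / Nat.gcd (m j) (p ^ ℓ - 1) : ℕ) / ((p ^ ℓ - 1 : ℕ) : ℚ) := by
      intro j
      set d := Nat.gcd (m j) (p ^ ℓ - 1) with hd
      have hd0 : 0 < d := Nat.gcd_pos_of_pos_left _ (hm j)
      have hmul : d * ((p ^ ℓ - 1) / d) = p ^ ℓ - 1 :=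
        Nat.mul_div_cancel' (Nat.gcd_dvd_right _ _)
      have hdQ : (0 : ℚ) < (d : ℚ) := by exact_mod_cast hd0
      have hmulQ : ((p ^ ℓ - 1 : ℕ) : ℚ) = (d : ℚ) * (((p ^ ℓ - 1) / d : ℕ) : ℚ) := by
        rw [← Nat.cast_mul, hmul]
      rw [div_eq_div_iff hdQ.ne' hpos.ne', one_mul, hmulQ]; ring
    rw [Finset.sum_congr rfl fun j _ => hterm j, ← Finset.sum_div, hcast] at hineq
    have hD : (0 : ℚ) < (p : ℚ) ^ ℓ - 1 := by rw [← hcast]; exact hpos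
    have h2 := (div_lt_div_iff_of_pos_right hD).mp hineq
    have h3 : ((q - 1 : ℕ) : ℚ)
        < ∑ j, (((p ^ ℓ - 1) / (m j).gcd (p ^ ℓ - 1) : ℕ) : ℚ) := by
      rw [Nat.cast_sub (by omega : 1 ≤ q), Nat.cast_one]; exact h2
    exact_mod_cast h3
  -- the solution set
  set f : (Fin n → ↥K) → F := fun x => (∑ j, b j * ((x j : F)) ^ m j) - c with hf
  set S : Finset (Fin n → ↥K) := Finset.univ.filter (fun x => f x = 0) with hS
  -- the key character-sum computation
  have hzero : ∑ x : Fin n → ↥K, f x ^ (q - 1) = 0 := by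
    apply aux_zero_sum F K n m hm b c (q - 1)
    rw [hcardK]
    exact hcount
  have hterm : ∀ x : Fin n → ↥K, (1 : F) - f x ^ (q - 1) = if f x = 0 then 1 else 0 := by
    intro x
    by_cases hx : f x = 0
    · rw [if_pos hx, hx, zero_pow (by omega : q - 1 ≠ 0), sub_zero]
    · rw [if_neg hx, ← hq, FiniteField.pow_card_sub_one_eq_one (f x) hx, sub_self]
  have hid : ((S.card : ℕ) : F) = 0 := by
    have h1 : ((S.card : ℕ) : F) = ∑ x : Fin n → ↥K, ((1 : F) - f x ^ (q - 1)) := by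
      rw [Finset.sum_congr rfl fun x _ => hterm x, Finset.sum_boole, hS]
    rw [h1, Finset.sum_sub_distrib, hzero, sub_zero, Finset.sum_const, Finset.card_univ,
      Fintype.card_fun, hcardK, Fintype.card_fin, nsmul_eq_mul, mul_one, ← pow_mul]
    push_cast
    rw [hpF]
    exact zero_pow (Nat.mul_ne_zero (by omega) (by omega))
  -- S is nonempty
  obtain ⟨x₀, hx₀K, hx₀⟩ := hsol
  have hmem : (fun j => (⟨x₀ j, hx₀K j⟩ : ↥K)) ∈ S := by
    rw [hS, Finset.mem_filter]
    refine ⟨Finset.mem_univ _, ?_⟩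
    show (∑ j, b j * ((x₀ j : F)) ^ m j) - c = 0
    rw [hx₀, sub_self]
  have hSpos : 0 < S.card := Finset.card_pos.mpr ⟨_, hmem⟩
  have hpdvd : p ∣ S.card := (CharP.cast_eq_zero_iff F p S.card).mp hid
  have hS2 : 1 < S.card := lt_of_lt_of_le hp.one_lt (Nat.le_of_dvd hSpos hpdvd)
  obtain ⟨a, ha, a', ha', hne⟩ := Finset.one_lt_card.mp hS2
  refine ⟨fun j => (a j : F), fun j => (a' j : F), ?_, ⟨fun j => (a j).2, ?_⟩,
    ⟨fun j => (a' j).2, ?_⟩⟩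
  · intro h
    apply hne
    funext j
    exact Subtype.ext (congrFun h j)
  · have := (Finset.mem_filter.mp ha).2
    rw [hf] at this
    exact sub_eq_zero.mp this
  · have := (Finset.mem_filter.mp ha').2
    rw [hf] at this
    exact sub_eq_zero.mp this
end

section
/- Let F be the finite field with 25 elements and g a generator of the multiplicative group F*. Then the equation X₁³ + g·X₂³ = 0 has only the trivial solution (0,0) in F². In particular, it has only the trivial solution with X₁, X₂ in the prime subfield F₅, even though 1/gcd(3,4) + 1/gcd(3,4) = 2 > 1. -/
/-- Over `F₂₅`, with `g` a generator of the multiplicative group, the equation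
`X₁³ + g·X₂³ = 0` has only the trivial solution. -/
theorem stmt_18 (F : Type*) [Field F] [Fintype F] (hF : Fintype.card F = 25)
    (g : Fˣ) (hg : ∀ u : Fˣ, u ∈ Subgroup.zpowers g) :
    ∀ x y : F, x ^ 3 + (g : F) * y ^ 3 = 0 → x = 0 ∧ y = 0 := by
  classical
  intro x y h
  have hord : orderOf g = 24 := by
    rw [orderOf_eq_card_of_forall_mem_zpowers hg, Nat.card_eq_fintype_card, Fintype.card_units, hF]
  by_cases hy : y = 0
  · subst hy
    simp only [ne_eq, OfNat.ofNat_ne_zero, not_false_eq_true, zero_pow, mul_zero,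
      add_zero] at h
    exact ⟨pow_eq_zero_iff (by norm_num) |>.mp h, rfl⟩
  · exfalso
    set t : F := -x / y with ht
    have htg : (g : F) = t ^ 3 := by
      rw [ht, div_pow, eq_div_iff (pow_ne_zero 3 hy)]
      linear_combination h
    have htne : t ≠ 0 := by
      intro h0
      rw [h0] at htg
      simp at htg
    have h24 : t ^ 24 = 1 := by
      have := FiniteField.pow_card_sub_one_eq_one t htne
      rwa [hF] at this
    have hg8 : g ^ 8 = 1 := by
      have : ((g ^ 8 : Fˣ) : F) = ((1 : Fˣ) : F) := by
        push_cast
        rw [htg, ← pow_mul]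
        simpa using h24
      exact Units.ext this
    have := orderOf_dvd_of_pow_eq_one hg8
    rw [hord] at this
    omega
end
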